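/- arXiv:2604.13779 — 4 statements merged into one kernel-verified Lean document; each statement's English description precedes it below -/
import Mathlib

section
/- For the INMA(q1,q2) random field, the variance of each observation satisfies V(X_{s,t}) = μ_X + (σ_ε² − μ_ε) · ∑_{i=0}^{q1} ∑_{j=0}^{q2} β_{ij}², where μ_X = μ_ε β_•. (Proposition 1, variance.) -/
/-!
Write `X_{s,t} = ∑_{i,j} T_{ij}` with `T_{ij} = β_{ij} ∘ ε_{s-i,t-j}`. Distinct `(i,j)` give
distinct sites, and since the counting series are independent of the innovations, conditioning
on the innovations gives `E[T_{ij} T_{kl}] = β_{ij} β_{kl} E[ε_p] E[ε_{p'}]`: the summands are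
uncorrelated. Conditionally on `ε_p = n`, a thinning is a sum of `n` independent Bernoulli(`β`)
variables, so `E[T²] = β E[ε] + β² E[ε(ε-1)]`, i.e. `V(T) = β μ_ε + β² (σ_ε² - μ_ε)`.
The conditioning is Fubini against the product law of the two independent families; it is done
in `ℝ≥0∞`, where it needs no integrability, and only the final moments are moved to `ℝ`.
-/

open MeasureTheory ProbabilityTheory Finset
open scoped ENNReal

namespace ProbabilityTheory

variable {Ω ι α β κ : Type*} [MeasurableSpace Ω] [MeasurableSpace α] [MeasurableSpace β]
  {P : Measure Ω}

theorem IndepFun.lintegral_comp_eq_lintegral_lintegral [IsFiniteMeasure P] {U : Ω → α}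
    {V : Ω → β} (hUV : IndepFun U V P) (hU : Measurable U) (hV : Measurable V)
    {g : α → β → ℝ≥0∞} (hg : Measurable (Function.uncurry g)) :
    ∫⁻ ω, g (U ω) (V ω) ∂P = ∫⁻ ω, ∫⁻ ω', g (U ω) (V ω') ∂P ∂P := by
  have hmap := (indepFun_iff_map_prod_eq_prod_map_map hU.aemeasurable hV.aemeasurable).mp hUV
  have hinner : Measurable fun a ↦ ∫⁻ c, g a c ∂P.map V := hg.lintegral_prod_right'
  calc ∫⁻ ω, g (U ω) (V ω) ∂P = ∫⁻ x, Function.uncurry g x ∂P.map (fun ω ↦ (U ω, V ω)) :=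
        (lintegral_map hg (hU.prodMk hV)).symm
    _ = ∫⁻ a, ∫⁻ c, g a c ∂P.map V ∂P.map U := by
      rw [hmap, lintegral_prod _ hg.aemeasurable]
      rfl
    _ = ∫⁻ ω, ∫⁻ ω', g (U ω) (V ω') ∂P ∂P := by
      rw [lintegral_map hinner hU]
      congr with ω
      exact lintegral_map (hg.comp measurable_prodMk_left) hV

theorem IndepFun.lintegral_finsetSum_comp [IsFiniteMeasure P] [Countable α]
    [MeasurableSingletonClass α] {U : Ω → α} {V : Ω → β} (hUV : IndepFun U V P)
    (hU : Measurable U) (hV : Measurable V) (S : α → Finset κ) {w : κ → β → ℝ≥0∞}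
    (hw : ∀ k, Measurable (w k)) :
    ∫⁻ ω, ∑ k ∈ S (U ω), w k (V ω) ∂P = ∫⁻ ω, ∑ k ∈ S (U ω), ∫⁻ ω', w k (V ω') ∂P ∂P := by
  rw [hUV.lintegral_comp_eq_lintegral_lintegral hU hV (g := fun a c ↦ ∑ k ∈ S a, w k c)
    (measurable_from_prod_countable_right fun a ↦ Finset.measurable_sum (S a) fun k _ ↦ hw k)]
  congr with ω
  exact lintegral_finsetSum _ fun k _ ↦ (hw k).comp hV

theorem iIndepFun.lintegral_natCast_mul_apply_of_ne {Y : ι → Ω → κ → ℕ}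
    (hY : ∀ i, Measurable (Y i)) (hind : iIndepFun Y P) {i j : ι} (hij : i ≠ j) (a a' : κ) :
    ∫⁻ ω, ((Y i ω a * Y j ω a' : ℕ) : ℝ≥0∞) ∂P
      = (∫⁻ ω, (Y i ω a : ℝ≥0∞) ∂P) * ∫⁻ ω, (Y j ω a' : ℝ≥0∞) ∂P := by
  have hcast (b : κ) : Measurable fun F : κ → ℕ ↦ (F b : ℝ≥0∞) := by fun_prop
  push_cast
  exact lintegral_mul_eq_lintegral_mul_lintegral_of_indepFun ((hcast a).comp (hY i))
    ((hcast a').comp (hY j)) ((hind.indepFun hij).comp (hcast a) (hcast a'))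

end ProbabilityTheory

section NatValued

variable {Ω : Type*} [MeasurableSpace Ω] {P : Measure Ω} {f : Ω → ℕ}

theorem integral_natCast_eq_toReal_lintegral (hf : Measurable f) :
    ∫ ω, (f ω : ℝ) ∂P = (∫⁻ ω, (f ω : ℝ≥0∞) ∂P).toReal := by
  rw [← integral_toReal (f := fun ω ↦ (f ω : ℝ≥0∞)) (by fun_prop)
    (ae_of_all _ fun _ ↦ ENNReal.natCast_lt_top _)]
  simp

theorem integrable_natCast_iff_lintegral_ne_top (hf : Measurable f) :
    Integrable (fun ω ↦ (f ω : ℝ)) P ↔ ∫⁻ ω, (f ω : ℝ≥0∞) ∂P ≠ ⊤ := by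
  rw [Integrable, hasFiniteIntegral_iff_enorm, lt_top_iff_ne_top]
  simp only [Real.enorm_natCast]
  exact and_iff_right (by fun_prop)

theorem lintegral_natCast_eq_measure_of_le_one (hf : Measurable f) (h1 : ∀ ω, f ω ≤ 1) :
    ∫⁻ ω, (f ω : ℝ≥0∞) ∂P = P {ω | f ω = 1} := by
  have hind : (fun ω ↦ (f ω : ℝ≥0∞)) = {ω | f ω = 1}.indicator 1 := by
    ext ω
    rcases Nat.le_one_iff_eq_zero_or_eq_one.mp (h1 ω) with h | h <;> simp [h]
  rw [hind]
  exact lintegral_indicator_one (hf (measurableSet_singleton 1))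

theorem Nat.cast_mul_self_sub_self (n : ℕ) : ((n * n - n : ℕ) : ℝ) = (n : ℝ) ^ 2 - n := by
  rw [Nat.cast_sub (Nat.le_mul_self n), Nat.cast_mul, sq]

theorem MeasureTheory.MemLp.lintegral_natCast_mul_self_sub_self_ne_top [IsFiniteMeasure P]
    (hf : Measurable f) (h2 : MemLp (fun ω ↦ (f ω : ℝ)) 2 P) :
    ∫⁻ ω, ((f ω * f ω - f ω : ℕ) : ℝ≥0∞) ∂P ≠ ⊤ := by
  rw [← integrable_natCast_iff_lintegral_ne_top (by fun_prop)]
  simp_rw [Nat.cast_mul_self_sub_self]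
  exact h2.integrable_sq.sub (h2.integrable one_le_two)

end NatValued

theorem Finset.sum_product_self_ite_eq {M α : Type*} [AddCommMonoid M] [DecidableEq α]
    (s : Finset α) (x y : M) :
    ∑ rr ∈ s ×ˢ s, (if rr.1 = rr.2 then x else y) = #s • x + (#s * #s - #s) • y := by
  rw [← s.diag_union_offDiag, sum_union s.disjoint_diag_offDiag,
    sum_congr rfl fun rr h ↦ if_pos (mem_diag.mp h).2,
    sum_congr rfl fun rr h ↦ if_neg (mem_offDiag.mp h).2.2, sum_const, sum_const, diag_card,
    offDiag_card]

section Thinning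

variable {Ω ι κ : Type*} [MeasurableSpace Ω] {P : Measure Ω}

/-- `thinning ε Z p a` is the paper's `β_a ∘ ε_p`, with the counting series indexed from `0`. -/
def thinning (ε : ι → Ω → ℕ) (Z : ι → ℕ → Ω → κ → ℕ) (p : ι) (a : κ) (ω : Ω) : ℕ :=
  ∑ r ∈ range (ε p ω), Z p r ω a

variable {ε : ι → Ω → ℕ} {Z : ι → ℕ → Ω → κ → ℕ}

theorem measurable_thinning {p : ι} (hε : Measurable (ε p)) (hZ : ∀ r, Measurable (Z p r))
    (a : κ) : Measurable (thinning ε Z p a) := by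
  have h : Measurable fun x : Ω × ℕ ↦ ∑ r ∈ range x.2, Z p r x.1 a :=
    measurable_from_prod_countable_left fun n ↦
      Finset.measurable_sum (range n) fun r _ ↦ (measurable_pi_apply a).comp (hZ r)
  exact h.comp (measurable_id.prodMk hε)

variable [IsProbabilityMeasure P] (hZ : ∀ p r, Measurable (Z p r)) (hε : ∀ p, Measurable (ε p))
  (hindep : IndepFun (fun ω p ↦ ε p ω) (fun ω (pr : ι × ℕ) ↦ Z pr.1 pr.2 ω) P)
  (hZiid : iIndepFun (fun pr : ι × ℕ ↦ Z pr.1 pr.2) P)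

include hZ hε hindep

theorem lintegral_thinning_eq_lintegral_sum (p : ι) (a : κ) :
    ∫⁻ ω, (thinning ε Z p a ω : ℝ≥0∞) ∂P
      = ∫⁻ ω, ∑ r ∈ range (ε p ω), ∫⁻ ω', (Z p r ω' a : ℝ≥0∞) ∂P ∂P := by
  have hU : IndepFun (ε p) (fun ω (pr : ι × ℕ) ↦ Z pr.1 pr.2 ω) P :=
    hindep.comp (measurable_pi_apply p) measurable_id
  have := hU.lintegral_finsetSum_comp (hε p) (measurable_pi_lambda _ fun pr ↦ hZ pr.1 pr.2)
    range (w := fun r F ↦ (F (p, r) a : ℝ≥0∞)) (fun r ↦ by fun_prop)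
  simpa only [thinning, Nat.cast_sum] using this

theorem lintegral_thinning_mul_eq_lintegral_sum (p p' : ι) (a a' : κ) :
    ∫⁻ ω, ((thinning ε Z p a ω * thinning ε Z p' a' ω : ℕ) : ℝ≥0∞) ∂P
      = ∫⁻ ω, ∑ rr ∈ range (ε p ω) ×ˢ range (ε p' ω),
          ∫⁻ ω', ((Z p rr.1 ω' a * Z p' rr.2 ω' a' : ℕ) : ℝ≥0∞) ∂P ∂P := by
  have hU : IndepFun (fun ω ↦ (ε p ω, ε p' ω)) (fun ω (pr : ι × ℕ) ↦ Z pr.1 pr.2 ω) P :=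
    hindep.comp ((measurable_pi_apply p).prodMk (measurable_pi_apply p')) measurable_id
  have := hU.lintegral_finsetSum_comp ((hε p).prodMk (hε p'))
    (measurable_pi_lambda _ fun pr ↦ hZ pr.1 pr.2) (fun n ↦ range n.1 ×ˢ range n.2)
    (w := fun rr F ↦ ((F (p, rr.1) a * F (p', rr.2) a' : ℕ) : ℝ≥0∞)) (fun rr ↦ by fun_prop)
  simpa only [thinning, sum_mul_sum, ← sum_product', Nat.cast_sum] using this

theorem lintegral_thinning {p : ι} {a : κ} {b : ℝ≥0∞} (h01 : ∀ r ω, Z p r ω a ≤ 1)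
    (hb : ∀ r, P {ω | Z p r ω a = 1} = b) :
    ∫⁻ ω, (thinning ε Z p a ω : ℝ≥0∞) ∂P = b * ∫⁻ ω, (ε p ω : ℝ≥0∞) ∂P := by
  have hZb (r : ℕ) : ∫⁻ ω, (Z p r ω a : ℝ≥0∞) ∂P = b :=
    (lintegral_natCast_eq_measure_of_le_one (by fun_prop) (h01 r)).trans (hb r)
  simp_rw [lintegral_thinning_eq_lintegral_sum hZ hε hindep, hZb, sum_const, card_range,
    nsmul_eq_mul]
  rw [lintegral_mul_const _ (by fun_prop), mul_comm]

include hZiid in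
theorem lintegral_thinning_mul_self {p : ι} {a : κ} {b : ℝ≥0∞} (h01 : ∀ r ω, Z p r ω a ≤ 1)
    (hb : ∀ r, P {ω | Z p r ω a = 1} = b) :
    ∫⁻ ω, ((thinning ε Z p a ω * thinning ε Z p a ω : ℕ) : ℝ≥0∞) ∂P
      = b * ∫⁻ ω, (ε p ω : ℝ≥0∞) ∂P
        + b ^ 2 * ∫⁻ ω, ((ε p ω * ε p ω - ε p ω : ℕ) : ℝ≥0∞) ∂P := by
  have hZb (r : ℕ) : ∫⁻ ω, (Z p r ω a : ℝ≥0∞) ∂P = b :=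
    (lintegral_natCast_eq_measure_of_le_one (by fun_prop) (h01 r)).trans (hb r)
  have hZZ (rr : ℕ × ℕ) : ∫⁻ ω, ((Z p rr.1 ω a * Z p rr.2 ω a : ℕ) : ℝ≥0∞) ∂P
      = if rr.1 = rr.2 then b else b ^ 2 := by
    obtain ⟨r, r'⟩ := rr
    split_ifs with h
    · have hidem (ω : Ω) : Z p r ω a * Z p r ω a = Z p r ω a := by
        rcases Nat.le_one_iff_eq_zero_or_eq_one.mp (h01 r ω) with h0 | h1 <;> simp [*]
      simp only at h
      simp_rw [← h, hidem, hZb]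
    · refine (hZiid.lintegral_natCast_mul_apply_of_ne (fun pr ↦ hZ pr.1 pr.2)
        (i := (p, r)) (j := (p, r')) (by simpa using h) a a).trans ?_
      simp only [hZb, sq]
  simp_rw [lintegral_thinning_mul_eq_lintegral_sum hZ hε hindep, hZZ,
    Finset.sum_product_self_ite_eq, card_range, nsmul_eq_mul]
  rw [lintegral_add_left (by fun_prop), lintegral_mul_const _ (by fun_prop),
    lintegral_mul_const _ (by fun_prop)]
  ring

include hZiid in
theorem lintegral_thinning_mul_of_ne (hεiid : iIndepFun ε P) {p p' : ι} (hpp' : p ≠ p')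
    {a a' : κ} {b b' : ℝ≥0∞} (h01 : ∀ r ω, Z p r ω a ≤ 1) (h01' : ∀ r ω, Z p' r ω a' ≤ 1)
    (hb : ∀ r, P {ω | Z p r ω a = 1} = b) (hb' : ∀ r, P {ω | Z p' r ω a' = 1} = b') :
    ∫⁻ ω, ((thinning ε Z p a ω * thinning ε Z p' a' ω : ℕ) : ℝ≥0∞) ∂P
      = b * b' * ((∫⁻ ω, (ε p ω : ℝ≥0∞) ∂P) * ∫⁻ ω, (ε p' ω : ℝ≥0∞) ∂P) := by
  have hZb (r : ℕ) : ∫⁻ ω, (Z p r ω a : ℝ≥0∞) ∂P = b :=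
    (lintegral_natCast_eq_measure_of_le_one (by fun_prop) (h01 r)).trans (hb r)
  have hZb' (r : ℕ) : ∫⁻ ω, (Z p' r ω a' : ℝ≥0∞) ∂P = b' :=
    (lintegral_natCast_eq_measure_of_le_one (by fun_prop) (h01' r)).trans (hb' r)
  have hZZ (rr : ℕ × ℕ) : ∫⁻ ω, ((Z p rr.1 ω a * Z p' rr.2 ω a' : ℕ) : ℝ≥0∞) ∂P = b * b' :=
    (hZiid.lintegral_natCast_mul_apply_of_ne (fun pr ↦ hZ pr.1 pr.2) (i := (p, rr.1))
      (j := (p', rr.2)) (by simp [hpp']) a a').trans (by simp only [hZb, hZb'])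
  have hcast : Measurable fun n : ℕ ↦ (n : ℝ≥0∞) := measurable_of_countable _
  simp_rw [lintegral_thinning_mul_eq_lintegral_sum hZ hε hindep, hZZ, sum_const, card_product,
    card_range, nsmul_eq_mul, Nat.cast_mul]
  rw [lintegral_mul_const _ (by fun_prop), mul_comm]
  congr 1
  exact lintegral_mul_eq_lintegral_mul_lintegral_of_indepFun (hcast.comp (hε p))
    (hcast.comp (hε p')) ((hεiid.indepFun hpp').comp hcast hcast)

theorem integral_thinning {p : ι} {a : κ} {β : ℝ} (hβ : 0 ≤ β) (h01 : ∀ r ω, Z p r ω a ≤ 1)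
    (hb : ∀ r, P {ω | Z p r ω a = 1} = ENNReal.ofReal β) :
    ∫ ω, (thinning ε Z p a ω : ℝ) ∂P = β * ∫ ω, (ε p ω : ℝ) ∂P := by
  rw [integral_natCast_eq_toReal_lintegral (measurable_thinning (hε p) (hZ p) a),
    lintegral_thinning hZ hε hindep h01 hb, ENNReal.toReal_mul, ENNReal.toReal_ofReal hβ,
    integral_natCast_eq_toReal_lintegral (hε p)]

include hZiid

theorem memLp_thinning {p : ι} {a : κ} {b : ℝ≥0∞} (h01 : ∀ r ω, Z p r ω a ≤ 1)
    (hb : ∀ r, P {ω | Z p r ω a = 1} = b) (hε2 : MemLp (fun ω ↦ (ε p ω : ℝ)) 2 P) :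
    MemLp (fun ω ↦ (thinning ε Z p a ω : ℝ)) 2 P := by
  have hT := measurable_thinning (hε p) (hZ p) a
  have hb_ne_top : b ≠ ⊤ := hb 0 ▸ measure_ne_top P _
  have hε1 := (integrable_natCast_iff_lintegral_ne_top (hε p)).mp (hε2.integrable one_le_two)
  have hfact := hε2.lintegral_natCast_mul_self_sub_self_ne_top (hε p)
  rw [memLp_two_iff_integrable_sq (by fun_prop)]
  simp_rw [sq, ← Nat.cast_mul]
  rw [integrable_natCast_iff_lintegral_ne_top (by fun_prop),
    lintegral_thinning_mul_self hZ hε hindep hZiid h01 hb]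
  finiteness

theorem variance_thinning {p : ι} {a : κ} {β : ℝ} (hβ : 0 ≤ β) (h01 : ∀ r ω, Z p r ω a ≤ 1)
    (hb : ∀ r, P {ω | Z p r ω a = 1} = ENNReal.ofReal β)
    (hε2 : MemLp (fun ω ↦ (ε p ω : ℝ)) 2 P) :
    variance (fun ω ↦ (thinning ε Z p a ω : ℝ)) P
      = β * P[fun ω ↦ (ε p ω : ℝ)]
        + β ^ 2 * (variance (fun ω ↦ (ε p ω : ℝ)) P - P[fun ω ↦ (ε p ω : ℝ)]) := by
  have hT := measurable_thinning (hε p) (hZ p) a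
  have hε1 := (integrable_natCast_iff_lintegral_ne_top (hε p)).mp (hε2.integrable one_le_two)
  have hfact := hε2.lintegral_natCast_mul_self_sub_self_ne_top (hε p)
  have hsecond : P[(fun ω ↦ (thinning ε Z p a ω : ℝ)) ^ 2]
      = β * P[fun ω ↦ (ε p ω : ℝ)] + β ^ 2 * P[fun ω ↦ ((ε p ω * ε p ω - ε p ω : ℕ) : ℝ)] := by
    simp_rw [Pi.pow_apply, sq, ← Nat.cast_mul]
    rw [integral_natCast_eq_toReal_lintegral (by fun_prop),
      lintegral_thinning_mul_self hZ hε hindep hZiid h01 hb,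
      ENNReal.toReal_add (by finiteness) (by finiteness), ENNReal.toReal_mul,
      ENNReal.toReal_mul, ENNReal.toReal_pow, ENNReal.toReal_ofReal hβ,
      integral_natCast_eq_toReal_lintegral (hε p),
      integral_natCast_eq_toReal_lintegral (by fun_prop), sq β]
  have hfactorial : P[fun ω ↦ ((ε p ω * ε p ω - ε p ω : ℕ) : ℝ)]
      = P[(fun ω ↦ (ε p ω : ℝ)) ^ 2] - P[fun ω ↦ (ε p ω : ℝ)] := by
    simp_rw [Nat.cast_mul_self_sub_self]
    exact integral_sub hε2.integrable_sq (hε2.integrable one_le_two)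
  rw [variance_eq_sub (memLp_thinning hZ hε hindep hZiid h01 hb hε2), hsecond, hfactorial,
    integral_thinning hZ hε hindep hβ h01 hb, variance_eq_sub hε2]
  ring

theorem covariance_thinning_of_ne (hεiid : iIndepFun ε P) {p p' : ι} (hpp' : p ≠ p')
    {a a' : κ} {β β' : ℝ} (hβ : 0 ≤ β) (hβ' : 0 ≤ β')
    (h01 : ∀ r ω, Z p r ω a ≤ 1) (h01' : ∀ r ω, Z p' r ω a' ≤ 1)
    (hb : ∀ r, P {ω | Z p r ω a = 1} = ENNReal.ofReal β)
    (hb' : ∀ r, P {ω | Z p' r ω a' = 1} = ENNReal.ofReal β')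
    (hε2 : MemLp (fun ω ↦ (ε p ω : ℝ)) 2 P) (hε2' : MemLp (fun ω ↦ (ε p' ω : ℝ)) 2 P) :
    cov[fun ω ↦ (thinning ε Z p a ω : ℝ), fun ω ↦ (thinning ε Z p' a' ω : ℝ); P] = 0 := by
  have hT := measurable_thinning (hε p) (hZ p) a
  have hT' := measurable_thinning (hε p') (hZ p') a'
  have hmixed : P[(fun ω ↦ (thinning ε Z p a ω : ℝ)) * fun ω ↦ (thinning ε Z p' a' ω : ℝ)]
      = β * β' * (P[fun ω ↦ (ε p ω : ℝ)] * P[fun ω ↦ (ε p' ω : ℝ)]) := by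
    simp_rw [Pi.mul_apply, ← Nat.cast_mul]
    rw [integral_natCast_eq_toReal_lintegral (by fun_prop),
      lintegral_thinning_mul_of_ne hZ hε hindep hZiid hεiid hpp' h01 h01' hb hb',
      ENNReal.toReal_mul, ENNReal.toReal_mul, ENNReal.toReal_mul, ENNReal.toReal_ofReal hβ,
      ENNReal.toReal_ofReal hβ', integral_natCast_eq_toReal_lintegral (hε p),
      integral_natCast_eq_toReal_lintegral (hε p')]
  rw [covariance_eq_sub (memLp_thinning hZ hε hindep hZiid h01 hb hε2)
    (memLp_thinning hZ hε hindep hZiid h01' hb' hε2'), hmixed,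
    integral_thinning hZ hε hindep hβ h01 hb, integral_thinning hZ hε hindep hβ' h01' hb']
  ring

theorem variance_sum_thinning (hεiid : iIndepFun ε P) {s : Finset κ} {site : κ → ι}
    (hsite : Set.InjOn site s) {β : κ → ℝ} (hβ : ∀ a ∈ s, 0 ≤ β a)
    (h01 : ∀ a ∈ s, ∀ r ω, Z (site a) r ω a ≤ 1)
    (hb : ∀ a ∈ s, ∀ r, P {ω | Z (site a) r ω a = 1} = ENNReal.ofReal (β a))
    (hε2 : ∀ a ∈ s, MemLp (fun ω ↦ (ε (site a) ω : ℝ)) 2 P) :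
    variance (fun ω ↦ ∑ a ∈ s, (thinning ε Z (site a) a ω : ℝ)) P
      = ∑ a ∈ s, variance (fun ω ↦ (thinning ε Z (site a) a ω : ℝ)) P := by
  have hT (a : κ) (ha : a ∈ s) :=
    memLp_thinning hZ hε hindep hZiid (h01 a ha) (hb a ha) (hε2 a ha)
  rw [variance_fun_sum' hT]
  refine sum_congr rfl fun a ha ↦ ?_
  rw [sum_eq_single_of_mem a ha fun a' ha' hne ↦ covariance_thinning_of_ne hZ hε hindep hZiid
      hεiid (hsite.ne ha ha' hne.symm) (hβ a ha) (hβ a' ha') (h01 a ha) (h01 a' ha') (hb a ha)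
      (hb a' ha') (hε2 a ha) (hε2 a' ha'),
    covariance_self (hT a ha).aemeasurable]

end Thinning

theorem inma_variance_general
    {Ω : Type*} [MeasurableSpace Ω] (P : Measure Ω) [IsProbabilityMeasure P]
    (q1 q2 : ℕ)
    (β : ℕ → ℕ → ℝ)
    (hβ : ∀ i ≤ q1, ∀ j ≤ q2, β i j ∈ Set.Icc (0 : ℝ) 1)
    -- the i.i.d. innovations, with finite mean and variance
    (ε : ℤ × ℤ → Ω → ℕ) (hεmeas : ∀ p, Measurable (ε p))
    (hεiid : iIndepFun ε P)
    (hεid : ∀ p, Measure.map (ε p) P = Measure.map (ε (0, 0)) P)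
    (hεL2 : Integrable (fun ω => ((ε (0, 0) ω : ℝ)) ^ 2) P)
    (με : ℝ) (hμε : με = ∫ ω, (ε (0, 0) ω : ℝ) ∂P)
    (σε2 : ℝ) (hσε2 : σε2 = variance (fun ω => (ε (0, 0) ω : ℝ)) P)
    -- the counting-series vectors, i.i.d., with {0,1}-valued components
    (Z : ℤ × ℤ → ℕ → Ω → ℕ × ℕ → ℕ)
    (hZmeas : ∀ p r, Measurable (Z p r))
    (hZ01 : ∀ p r ω ij, Z p r ω ij ≤ 1)
    (hZiid : iIndepFun
      (fun pr : (ℤ × ℤ) × ℕ => Z pr.1 pr.2) P)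
    (hZβ : ∀ p r, ∀ i ≤ q1, ∀ j ≤ q2,
      P {ω | Z p r ω (i, j) = 1} = ENNReal.ofReal (β i j))
    -- the whole thinning family is independent of the innovation family
    (hindep : IndepFun (fun ω p => ε p ω)
      (fun ω (pr : (ℤ × ℤ) × ℕ) => Z pr.1 pr.2 ω) P)
    -- the INMA(q1,q2) random field
    (X : ℤ → ℤ → Ω → ℕ)
    (hX : ∀ s t ω, X s t ω =
      ∑ i ∈ range (q1 + 1), ∑ j ∈ range (q2 + 1),
        ∑ r ∈ range (ε (s - (i : ℤ), t - (j : ℤ)) ω),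
          Z (s - (i : ℤ), t - (j : ℤ)) r ω (i, j))
    (s t : ℤ) :
    variance (fun ω => (X s t ω : ℝ)) P =
      με * (∑ i ∈ range (q1 + 1), ∑ j ∈ range (q2 + 1), β i j)
        + (σε2 - με) * ∑ i ∈ range (q1 + 1), ∑ j ∈ range (q2 + 1), (β i j) ^ 2 := by
  set q := range (q1 + 1) ×ˢ range (q2 + 1)
  have hq {ij : ℕ × ℕ} (h : ij ∈ q) : ij.1 ≤ q1 ∧ ij.2 ≤ q2 := by
    simp only [q, mem_product, mem_range] at h
    omega
  have hsite : Set.InjOn (fun ij : ℕ × ℕ ↦ (s - (ij.1 : ℤ), t - (ij.2 : ℤ))) q :=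
    fun ij _ kl _ h ↦ by simpa [Prod.ext_iff] using h
  have hεid' (p : ℤ × ℤ) : IdentDistrib (fun ω ↦ (ε p ω : ℝ)) (fun ω ↦ (ε (0, 0) ω : ℝ)) P P :=
    IdentDistrib.comp ⟨(hεmeas p).aemeasurable, (hεmeas _).aemeasurable, hεid p⟩
      (measurable_of_countable _)
  have hε2 (p : ℤ × ℤ) : MemLp (fun ω ↦ (ε p ω : ℝ)) 2 P :=
    (hεid' p).memLp_iff.mpr ((memLp_two_iff_integrable_sq (by fun_prop)).mpr hεL2)
  have hXsum : (fun ω ↦ (X s t ω : ℝ))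
      = fun ω ↦ ∑ ij ∈ q, (thinning ε Z (s - (ij.1 : ℤ), t - (ij.2 : ℤ)) ij ω : ℝ) := by
    ext ω
    simp [hX, thinning, q, sum_product]
  rw [hXsum, variance_sum_thinning hZmeas hεmeas hindep hZiid hεiid hsite
      (β := fun ij ↦ β ij.1 ij.2) (fun ij h ↦ (hβ _ (hq h).1 _ (hq h).2).1)
      (fun ij _ r ω ↦ hZ01 _ r ω ij) (fun ij h r ↦ hZβ _ r _ (hq h).1 _ (hq h).2)
      (fun ij _ ↦ hε2 _),
    sum_congr rfl fun ij h ↦ variance_thinning hZmeas hεmeas hindep hZiid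
      (hβ _ (hq h).1 _ (hq h).2).1 (fun r ω ↦ hZ01 _ r ω ij)
      (fun r ↦ hZβ _ r _ (hq h).1 _ (hq h).2) (hε2 _)]
  simp only [(hεid' _).integral_eq, (hεid' _).variance_eq, ← hμε, ← hσε2, q, sum_product,
    mul_sum, ← sum_add_distrib]
  exact sum_congr rfl fun i _ ↦ sum_congr rfl fun j _ ↦ by ring

/-- Proposition 1 (variance). -/
theorem inma_variance
    {Ω : Type*} [MeasurableSpace Ω] (P : Measure Ω) [IsProbabilityMeasure P]
    (q1 q2 : ℕ) (hq : 1 ≤ q1 + q2)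
    (β : ℕ → ℕ → ℝ)
    (hβ : ∀ i ≤ q1, ∀ j ≤ q2, β i j ∈ Set.Icc (0 : ℝ) 1)
    -- the i.i.d. innovations, with finite mean and variance
    (ε : ℤ × ℤ → Ω → ℕ) (hεmeas : ∀ p, Measurable (ε p))
    (hεiid : iIndepFun ε P)
    (hεid : ∀ p, Measure.map (ε p) P = Measure.map (ε (0, 0)) P)
    (hεL2 : Integrable (fun ω => ((ε (0, 0) ω : ℝ)) ^ 2) P)
    (με : ℝ) (hμε : με = ∫ ω, (ε (0, 0) ω : ℝ) ∂P)
    (σε2 : ℝ) (hσε2 : σε2 = variance (fun ω => (ε (0, 0) ω : ℝ)) P)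
    -- the counting-series vectors, i.i.d., with {0,1}-valued components
    (Z : ℤ × ℤ → ℕ → Ω → ℕ × ℕ → ℕ)
    (hZmeas : ∀ p r, Measurable (Z p r))
    (hZ01 : ∀ p r ω ij, Z p r ω ij ≤ 1)
    (hZiid : iIndepFun
      (fun pr : (ℤ × ℤ) × ℕ => Z pr.1 pr.2) P)
    (hZid : ∀ p r, Measure.map (Z p r) P = Measure.map (Z (0, 0) 0) P)
    (hZβ : ∀ p r, ∀ i ≤ q1, ∀ j ≤ q2,
      P {ω | Z p r ω (i, j) = 1} = ENNReal.ofReal (β i j))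
    -- the whole thinning family is independent of the innovation family
    (hindep : IndepFun (fun ω p => ε p ω)
      (fun ω (pr : (ℤ × ℤ) × ℕ) => Z pr.1 pr.2 ω) P)
    -- the INMA(q1,q2) random field
    (X : ℤ → ℤ → Ω → ℕ)
    (hX : ∀ s t ω, X s t ω =
      ∑ i ∈ range (q1 + 1), ∑ j ∈ range (q2 + 1),
        ∑ r ∈ range (ε (s - (i : ℤ), t - (j : ℤ)) ω),
          Z (s - (i : ℤ), t - (j : ℤ)) r ω (i, j))
    (s t : ℤ) :
    variance (fun ω => (X s t ω : ℝ)) P =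
      με * (∑ i ∈ range (q1 + 1), ∑ j ∈ range (q2 + 1), β i j)
        + (σε2 - με) * ∑ i ∈ range (q1 + 1), ∑ j ∈ range (q2 + 1), (β i j) ^ 2 :=
  inma_variance_general P q1 q2 β hβ ε hεmeas hεiid hεid hεL2 με hμε σε2 hσε2 Z hZmeas hZ01 hZiid
    hZβ hindep X hX s t
end

section
/- For the INMA(q1,q2) random field and every u ∈ [0,1], the probability generating function of X_{s,t} factorizes as E[u^{X_{s,t}}] = ∏_{i=0}^{q1} ∏_{j=0}^{q2} pgf_ε(1 + β_{ij}(u − 1)), where pgf_ε(v) = E[v^{ε_{0,0}}]. (Proposition 1, pgf.) -/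
/-!
Condition on the innovations. Since the counting series are independent of them,
`E[u ^ X_{s,t}]` is the average over the innovation law of `E[u ^ X_{s,t}]` with the innovations
frozen at a value `e`. For frozen `e`, `u ^ X_{s,t}` is a product of the factors
`u ^ Z_{(s-i,t-j); r}^{(i,j)}`, indexed by distinct pairs (site, `r`), hence independent Bernoulli
variables with pgf `1 + β_{ij} (u - 1)`; so the frozen expectation is
`∏ (1 + β_{ij} (u - 1)) ^ e(s-i, t-j)`. The sites `(s-i, t-j)` are distinct, so independence and
identical distribution of the innovations factor the remaining expectation into pgfs of `ε_{0,0}`.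
-/

open MeasureTheory ProbabilityTheory Finset

lemma measurable_sum_range {α : Type*} [MeasurableSpace α] {N : α → ℕ} (hN : Measurable N)
    {g : ℕ → α → ℕ} (hg : ∀ r, Measurable (g r)) :
    Measurable fun x => ∑ r ∈ range (N x), g r x := by
  have hsum : Measurable fun nx : ℕ × α => ∑ r ∈ range nx.1, g r nx.2 :=
    measurable_from_prod_countable_right fun n =>
      measurable_fun_sum (range n) fun r _ => hg r
  exact hsum.comp (hN.prodMk measurable_id)

namespace ProbabilityTheory

variable {Ω : Type*} [MeasurableSpace Ω] {P : Measure Ω}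

lemma iIndepFun.integral_finset_prod_eq_prod_integral {ι : Type*} {f : ι → Ω → ℝ}
    (hf : iIndepFun f P) (hmeas : ∀ i, AEStronglyMeasurable (f i) P) (s : Finset ι) :
    ∫ ω, ∏ i ∈ s, f i ω ∂P = ∏ i ∈ s, ∫ ω, f i ω ∂P := by
  simp_rw [← prod_coe_sort s]
  exact (hf.precomp Subtype.val_injective).integral_fun_prod_eq_prod_integral fun i => hmeas i

lemma IndepFun.integral_comp_eq_integral_integral [IsFiniteMeasure P]
    {α β : Type*} [MeasurableSpace α] [MeasurableSpace β] {X : Ω → α} {Y : Ω → β}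
    (hXY : IndepFun X Y P) (hX : Measurable X) (hY : Measurable Y) {f : α × β → ℝ}
    (hf : StronglyMeasurable f) (hfi : Integrable f ((P.map X).prod (P.map Y))) :
    ∫ ω, f (X ω, Y ω) ∂P = ∫ ω, ∫ ω', f (X ω, Y ω') ∂P ∂P := by
  have hmap := (indepFun_iff_map_prod_eq_prod_map_map hX.aemeasurable hY.aemeasurable).mp hXY
  calc ∫ ω, f (X ω, Y ω) ∂P = ∫ z, f z ∂(P.map fun ω => (X ω, Y ω)) :=
        (integral_map (hX.prodMk hY).aemeasurable hf.aestronglyMeasurable).symm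
    _ = ∫ x, ∫ y, f (x, y) ∂(P.map Y) ∂(P.map X) := by rw [hmap, integral_prod f hfi]
    _ = ∫ ω, ∫ y, f (X ω, y) ∂(P.map Y) ∂P :=
        integral_map hX.aemeasurable hfi.integral_prod_left.aestronglyMeasurable
    _ = ∫ ω, ∫ ω', f (X ω, Y ω') ∂P ∂P := integral_congr_ae <| .of_forall fun ω =>
        integral_map hY.aemeasurable
          (hf.comp_measurable measurable_prodMk_left).aestronglyMeasurable

lemma integral_pow_of_bernoulli [IsProbabilityMeasure P] {Y : Ω → ℕ} (hY : Measurable Y)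
    (hY1 : ∀ ω, Y ω ≤ 1) {b : ℝ} (hb : 0 ≤ b) (hPb : P {ω | Y ω = 1} = ENNReal.ofReal b)
    (u : ℝ) : ∫ ω, u ^ Y ω ∂P = 1 + b * (u - 1) := by
  set B := {ω | Y ω = 1}
  have hB : MeasurableSet B := hY (measurableSet_singleton 1)
  have hpow : ∀ ω, u ^ Y ω = 1 + B.indicator (fun _ => u - 1) ω := by
    intro ω
    rcases Nat.le_one_iff_eq_zero_or_eq_one.mp (hY1 ω) with h | h <;> simp [B, h]
  rw [integral_congr_ae (.of_forall hpow), integral_add (integrable_const 1)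
    ((integrable_const _).indicator hB), integral_indicator_const _ hB, measureReal_def, hPb,
    ENNReal.toReal_ofReal hb]
  simp

end ProbabilityTheory

def lagSite (s t : ℤ) (ij : ℕ × ℕ) : ℤ × ℤ := (s - ij.1, t - ij.2)

lemma lagSite_injective (s t : ℤ) : Function.Injective (lagSite s t) := by
  rintro ⟨i, j⟩ ⟨i', j'⟩ h
  simp only [lagSite, Prod.mk.injEq] at h
  ext <;> omega

/-- `X_{s,t}` over the lags in `K`, as a function of realisations `e` of the innovations and `z`
of the counting series. -/
def inmaSum (K : Finset (ℕ × ℕ)) (s t : ℤ) (e : ℤ × ℤ → ℕ)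
    (z : (ℤ × ℤ) × ℕ → ℕ × ℕ → ℕ) : ℕ :=
  ∑ ij ∈ K, ∑ r ∈ range (e (lagSite s t ij)), z (lagSite s t ij, r) ij

lemma measurable_inmaSum (K : Finset (ℕ × ℕ)) (s t : ℤ) :
    Measurable fun x : (ℤ × ℤ → ℕ) × ((ℤ × ℤ) × ℕ → ℕ × ℕ → ℕ) => inmaSum K s t x.1 x.2 :=
  measurable_fun_sum K fun ij _ =>
    measurable_sum_range ((measurable_pi_apply _).comp measurable_fst) fun _ =>
      (measurable_pi_apply ij).comp ((measurable_pi_apply _).comp measurable_snd)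

lemma pow_inmaSum (u : ℝ) (K : Finset (ℕ × ℕ)) (s t : ℤ) (e : ℤ × ℤ → ℕ)
    (z : (ℤ × ℤ) × ℕ → ℕ × ℕ → ℕ) :
    u ^ inmaSum K s t e z =
      ∏ x ∈ K.sigma fun ij => range (e (lagSite s t ij)), u ^ z (lagSite s t x.1, x.2) x.1 := by
  simp_rw [inmaSum, prod_sigma, ← prod_pow_eq_pow_sum]

lemma integral_pow_inmaSum {Ω : Type*} [MeasurableSpace Ω] {P : Measure Ω}
    [IsProbabilityMeasure P] {Z : (ℤ × ℤ) × ℕ → Ω → ℕ × ℕ → ℕ} (hZmeas : ∀ q, Measurable (Z q))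
    (hZ01 : ∀ q ω ij, Z q ω ij ≤ 1) (hZiid : iIndepFun Z P) {K : Finset (ℕ × ℕ)} {s t : ℤ}
    {b : ℕ × ℕ → ℝ} (hb : ∀ ij ∈ K, 0 ≤ b ij)
    (hZb : ∀ ij ∈ K, ∀ r, P {ω | Z (lagSite s t ij, r) ω ij = 1} = ENNReal.ofReal (b ij))
    (u : ℝ) (e : ℤ × ℤ → ℕ) :
    ∫ ω, u ^ inmaSum K s t e (fun q => Z q ω) ∂P =
      ∏ ij ∈ K, (1 + b ij * (u - 1)) ^ e (lagSite s t ij) := by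
  have hinj : Function.Injective fun x : (_ : ℕ × ℕ) × ℕ => (lagSite s t x.1, x.2) := by
    rintro ⟨ij, r⟩ ⟨ij', r'⟩ h
    obtain ⟨hij, rfl⟩ := Prod.mk.inj h
    obtain rfl := lagSite_injective s t hij
    rfl
  have hW : iIndepFun (fun x : (_ : ℕ × ℕ) × ℕ => fun ω => u ^ Z (lagSite s t x.1, x.2) ω x.1) P :=
    (hZiid.precomp hinj).comp (fun x z => u ^ z x.1) fun _ => by fun_prop
  simp_rw [pow_inmaSum]
  rw [hW.integral_finset_prod_eq_prod_integral (fun _ => by fun_prop), prod_sigma]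
  refine prod_congr rfl fun ij hij => ?_
  rw [prod_congr rfl fun r _ =>
    integral_pow_of_bernoulli (by fun_prop) (fun ω => hZ01 _ ω ij)
    (hb ij hij) (hZb ij hij r) u, prod_const, card_range]

theorem inma_pgf_general
    {Ω : Type*} [MeasurableSpace Ω] (P : Measure Ω) [IsProbabilityMeasure P]
    (q1 q2 : ℕ)
    (β : ℕ → ℕ → ℝ)
    (hβ : ∀ i ≤ q1, ∀ j ≤ q2, β i j ∈ Set.Icc (0 : ℝ) 1)
    -- the i.i.d. innovations, with finite mean and variance
    (ε : ℤ × ℤ → Ω → ℕ) (hεmeas : ∀ p, Measurable (ε p))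
    (hεiid : iIndepFun ε P)
    (hεid : ∀ p, Measure.map (ε p) P = Measure.map (ε (0, 0)) P)
    -- the counting-series vectors, i.i.d., with {0,1}-valued components
    (Z : ℤ × ℤ → ℕ → Ω → ℕ × ℕ → ℕ)
    (hZmeas : ∀ p r, Measurable (Z p r))
    (hZ01 : ∀ p r ω ij, Z p r ω ij ≤ 1)
    (hZiid : iIndepFun
      (fun pr : (ℤ × ℤ) × ℕ => Z pr.1 pr.2) P)
    (hZβ : ∀ p r, ∀ i ≤ q1, ∀ j ≤ q2,
      P {ω | Z p r ω (i, j) = 1} = ENNReal.ofReal (β i j))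
    -- the whole thinning family is independent of the innovation family
    (hindep : IndepFun (fun ω p => ε p ω)
      (fun ω (pr : (ℤ × ℤ) × ℕ) => Z pr.1 pr.2 ω) P)
    -- the INMA(q1,q2) random field
    (X : ℤ → ℤ → Ω → ℕ)
    (hX : ∀ s t ω, X s t ω =
      ∑ i ∈ range (q1 + 1), ∑ j ∈ range (q2 + 1),
        ∑ r ∈ range (ε (s - (i : ℤ), t - (j : ℤ)) ω),
          Z (s - (i : ℤ), t - (j : ℤ)) r ω (i, j))
    (s t : ℤ) :
    ∀ u ∈ Set.Icc (0 : ℝ) 1,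
      ∫ ω, u ^ X s t ω ∂P =
        ∏ i ∈ range (q1 + 1), ∏ j ∈ range (q2 + 1),
          ∫ ω, (1 + β i j * (u - 1)) ^ ε (0, 0) ω ∂P := by
  rintro u ⟨hu0, hu1⟩
  set K := range (q1 + 1) ×ˢ range (q2 + 1)
  set a : ℕ × ℕ → ℝ := fun ij => 1 + β ij.1 ij.2 * (u - 1)
  have hK : ∀ ij ∈ K, ij.1 ≤ q1 ∧ ij.2 ≤ q2 := fun ij hij => by
    simp only [K, mem_product, mem_range] at hij; omega
  have hXK : ∀ ω, X s t ω = inmaSum K s t (ε · ω) (fun pr => Z pr.1 pr.2 ω) := fun ω => by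
    rw [hX, inmaSum, sum_product]; rfl
  have hmeas : Measurable fun x : (ℤ × ℤ → ℕ) × ((ℤ × ℤ) × ℕ → ℕ × ℕ → ℕ) =>
      u ^ inmaSum K s t x.1 x.2 :=
    measurable_const.pow (measurable_inmaSum K s t)
  have hint : Integrable (fun x => u ^ inmaSum K s t x.1 x.2)
      ((P.map fun ω p => ε p ω).prod (P.map fun ω pr => Z pr.1 pr.2 ω)) :=
    .of_bound hmeas.aestronglyMeasurable 1 <| .of_forall fun x => by
      rw [Real.norm_of_nonneg (by positivity)]; exact pow_le_one₀ hu0 hu1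
  calc ∫ ω, u ^ X s t ω ∂P
      = ∫ ω, ∫ ω', u ^ inmaSum K s t (ε · ω) (fun pr => Z pr.1 pr.2 ω') ∂P ∂P := by
        simp_rw [hXK]
        exact hindep.integral_comp_eq_integral_integral (by fun_prop) (by fun_prop)
          hmeas.stronglyMeasurable hint
    _ = ∫ ω, ∏ ij ∈ K, a ij ^ ε (lagSite s t ij) ω ∂P := integral_congr_ae <| .of_forall fun ω =>
        integral_pow_inmaSum (by fun_prop) (fun _ => hZ01 _ _) hZiid
          (fun ij hij => (hβ _ (hK ij hij).1 _ (hK ij hij).2).1)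
          (fun ij hij r => hZβ _ r _ (hK ij hij).1 _ (hK ij hij).2) u _
    _ = ∏ ij ∈ K, ∫ ω, a ij ^ ε (lagSite s t ij) ω ∂P :=
        ((hεiid.precomp (lagSite_injective s t)).comp (fun ij n => a ij ^ n)
          fun _ => by fun_prop).integral_finset_prod_eq_prod_integral (fun _ => by fun_prop) K
    _ = ∏ ij ∈ K, ∫ ω, a ij ^ ε (0, 0) ω ∂P := prod_congr rfl fun ij _ =>
        (IdentDistrib.comp ⟨(hεmeas _).aemeasurable, (hεmeas _).aemeasurable, hεid _⟩
          (by fun_prop : Measurable fun n : ℕ => a ij ^ n)).integral_eq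
    _ = _ := prod_product _ _ _

/-- Proposition 1 (pgf). -/
theorem inma_pgf
    {Ω : Type*} [MeasurableSpace Ω] (P : Measure Ω) [IsProbabilityMeasure P]
    (q1 q2 : ℕ) (hq : 1 ≤ q1 + q2)
    (β : ℕ → ℕ → ℝ)
    (hβ : ∀ i ≤ q1, ∀ j ≤ q2, β i j ∈ Set.Icc (0 : ℝ) 1)
    -- the i.i.d. innovations, with finite mean and variance
    (ε : ℤ × ℤ → Ω → ℕ) (hεmeas : ∀ p, Measurable (ε p))
    (hεiid : iIndepFun ε P)
    (hεid : ∀ p, Measure.map (ε p) P = Measure.map (ε (0, 0)) P)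
    (hεL2 : Integrable (fun ω => ((ε (0, 0) ω : ℝ)) ^ 2) P)
    (με : ℝ) (hμε : με = ∫ ω, (ε (0, 0) ω : ℝ) ∂P)
    (σε2 : ℝ) (hσε2 : σε2 = variance (fun ω => (ε (0, 0) ω : ℝ)) P)
    -- the counting-series vectors, i.i.d., with {0,1}-valued components
    (Z : ℤ × ℤ → ℕ → Ω → ℕ × ℕ → ℕ)
    (hZmeas : ∀ p r, Measurable (Z p r))
    (hZ01 : ∀ p r ω ij, Z p r ω ij ≤ 1)
    (hZiid : iIndepFun
      (fun pr : (ℤ × ℤ) × ℕ => Z pr.1 pr.2) P)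
    (hZid : ∀ p r, Measure.map (Z p r) P = Measure.map (Z (0, 0) 0) P)
    (hZβ : ∀ p r, ∀ i ≤ q1, ∀ j ≤ q2,
      P {ω | Z p r ω (i, j) = 1} = ENNReal.ofReal (β i j))
    -- the whole thinning family is independent of the innovation family
    (hindep : IndepFun (fun ω p => ε p ω)
      (fun ω (pr : (ℤ × ℤ) × ℕ) => Z pr.1 pr.2 ω) P)
    -- the INMA(q1,q2) random field
    (X : ℤ → ℤ → Ω → ℕ)
    (hX : ∀ s t ω, X s t ω =
      ∑ i ∈ range (q1 + 1), ∑ j ∈ range (q2 + 1),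
        ∑ r ∈ range (ε (s - (i : ℤ), t - (j : ℤ)) ω),
          Z (s - (i : ℤ), t - (j : ℤ)) r ω (i, j))
    (s t : ℤ) :
    ∀ u ∈ Set.Icc (0 : ℝ) 1,
      ∫ ω, u ^ X s t ω ∂P =
        ∏ i ∈ range (q1 + 1), ∏ j ∈ range (q2 + 1),
          ∫ ω, (1 + β i j * (u - 1)) ^ ε (0, 0) ω ∂P :=
  inma_pgf_general P q1 q2 β hβ ε hεmeas hεiid hεid Z hZmeas hZ01 hZiid hZβ hindep X hX s t
end

section
/- Let ε be an ℕ-valued random variable with finite mean μ_ε and finite variance σ_ε², and let ((Z_r, Z'_r))_{r∈ℕ} be an i.i.d. sequence of pairs of {0,1}-valued random variables (the two coordinates within a pair possibly dependent), independent of ε, with P(Z_1 = 1) = β and P(Z'_1 = 1) = β'. Then the two thinnings β ∘ ε := ∑_{r=1}^{ε} Z_r and β' ∘ ε := ∑_{r=1}^{ε} Z'_r satisfy Cov(β ∘ ε, β' ∘ ε) = β β' σ_ε² + μ_ε · ( P(Z_1 = Z'_1 = 1) − β β' ). -/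
/-!
Conditioning on `ε = n`, which is independent of the pairs `(Z_r, Z'_r)`, reduces everything to
fixed-length sums. Expanding `E[(∑_{r<n} Z_r)(∑_{s<n} Z'_s)]`, the `n² - n` off-diagonal terms
factor into `ββ'` by independence and the `n` diagonal ones equal `γ = P(Z_1 = Z'_1 = 1)`, giving
`n² ββ' + n (γ - ββ')`. Averaging over the law of `ε` yields
`E[SS'] = ββ' E[ε²] + (γ - ββ') E[ε]`, while Wald's identity gives `E[S] = β E[ε]` and
`E[S'] = β' E[ε]`; subtracting leaves `ββ' Var ε + E[ε] (γ - ββ')`.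
-/

open MeasureTheory ProbabilityTheory Finset

section Bernoulli

variable {Ω : Type*} [MeasurableSpace Ω] {μ : Measure Ω}

theorem integral_natCast_eq_measureReal_of_le_one {X : Ω → ℕ} (hX : Measurable X)
    (h1 : ∀ ω, X ω ≤ 1) : ∫ ω, (X ω : ℝ) ∂μ = μ.real {ω | X ω = 1} := by
  have hind : (fun ω => (X ω : ℝ)) = Set.indicator (X ⁻¹' {1}) 1 := by
    funext ω
    rcases Nat.le_one_iff_eq_zero_or_eq_one.mp (h1 ω) with h | h <;> simp [h]
  rw [hind]
  exact integral_indicator_one (hX (measurableSet_singleton 1))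

theorem ProbabilityTheory.IdentDistrib.integral_natCast_eq_measureReal {X Y : Ω → ℕ}
    (h : IdentDistrib X Y μ μ) (hY : Measurable Y) (hY1 : ∀ ω, Y ω ≤ 1) :
    ∫ ω, (X ω : ℝ) ∂μ = μ.real {ω | Y ω = 1} :=
  (h.comp measurable_from_top).integral_eq.trans (integral_natCast_eq_measureReal_of_le_one hY hY1)

theorem ProbabilityTheory.IdentDistrib.integral_fst_mul_snd_eq_measureReal {V V₀ : Ω → ℕ × ℕ}
    (h : IdentDistrib V V₀ μ μ) (hV₀ : Measurable V₀) (h1 : ∀ ω, (V₀ ω).1 ≤ 1 ∧ (V₀ ω).2 ≤ 1) :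
    ∫ ω, ((V ω).1 : ℝ) * ((V ω).2 : ℝ) ∂μ = μ.real {ω | V₀ ω = (1, 1)} := by
  simpa only [Function.comp_apply, Pi.mul_apply, Nat.cast_mul, mul_eq_one, Prod.ext_iff] using
    (h.comp (measurable_fst.mul measurable_snd)).integral_natCast_eq_measureReal
      (hV₀.fst.mul hV₀.snd) fun ω => Nat.mul_le_mul (h1 ω).1 (h1 ω).2

theorem ProbabilityTheory.iIndepFun.integral_fst_mul_snd_of_ne {ι : Type*} {W : ι → Ω → ℕ × ℕ}
    (h : iIndepFun W μ) (hW : ∀ i, Measurable (W i)) {i j : ι} (hij : i ≠ j) :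
    ∫ ω, ((W i ω).1 : ℝ) * ((W j ω).2 : ℝ) ∂μ =
      (∫ ω, ((W i ω).1 : ℝ) ∂μ) * ∫ ω, ((W j ω).2 : ℝ) ∂μ :=
  ((h.indepFun hij).comp (measurable_from_top.comp measurable_fst)
    (measurable_from_top.comp measurable_snd)).integral_fun_mul_eq_mul_integral
    (measurable_from_top.comp (hW i).fst).aestronglyMeasurable
    (measurable_from_top.comp (hW j).snd).aestronglyMeasurable

end Bernoulli

-- The thinning `∑_{r=1}^{ε} Z_r` of the paper, with the index shifted to start at `0`.
def randomSum {Ω : Type*} (ε : Ω → ℕ) (Z : ℕ → Ω → ℝ) (ω : Ω) : ℝ :=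
  ∑ r ∈ range (ε ω), Z r ω

theorem abs_randomSum_le {Ω : Type*} {ε : Ω → ℕ} {Z : ℕ → Ω → ℝ} (hZ1 : ∀ r ω, |Z r ω| ≤ 1)
    (ω : Ω) : |randomSum ε Z ω| ≤ ε ω :=
  calc |randomSum ε Z ω| ≤ ∑ r ∈ range (ε ω), |Z r ω| := abs_sum_le_sum_abs _ _
    _ ≤ ∑ _r ∈ range (ε ω), (1 : ℝ) := sum_le_sum fun r _ => hZ1 r ω
    _ = ε ω := by simp

section RandomSum

variable {Ω : Type*} [MeasurableSpace Ω] {P : Measure Ω} {ε : Ω → ℕ}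

theorem hasSum_setIntegral_preimage_singleton {E : Type*} [NormedAddCommGroup E]
    [NormedSpace ℝ E] (hε : Measurable ε) {f : Ω → E} (hf : Integrable f P) :
    HasSum (fun n => ∫ ω in ε ⁻¹' {n}, f ω ∂P) (∫ ω, f ω ∂P) := by
  have h := hasSum_integral_iUnion (fun n => hε (measurableSet_singleton n))
    (pairwise_disjoint_fiber ε) hf.integrableOn
  rwa [← Set.preimage_iUnion, Set.iUnion_of_singleton, Set.preimage_univ, setIntegral_univ] at h

theorem hasSum_measureReal_preimage_singleton_mul (hε : Measurable ε) {g : ℕ → ℝ}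
    (hg : Integrable (fun ω => g (ε ω)) P) :
    HasSum (fun n => P.real (ε ⁻¹' {n}) * g n) (∫ ω, g (ε ω) ∂P) := by
  refine (hasSum_setIntegral_preimage_singleton hε hg).congr_fun fun n => ?_
  rw [setIntegral_congr_fun (hε (measurableSet_singleton n)) fun ω (hω : ε ω = n) => by rw [hω],
    setIntegral_const, smul_eq_mul]

theorem ProbabilityTheory.IndepFun.hasSum_integral_comp {α : Type*} [MeasurableSpace α] {X : Ω → α}
    (hindep : IndepFun ε X P) (hε : Measurable ε) (hX : Measurable X) {F : ℕ → α → ℝ}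
    (hF : ∀ n, Measurable (F n)) (hint : Integrable (fun ω => F (ε ω) (X ω)) P) :
    HasSum (fun n => P.real (ε ⁻¹' {n}) * ∫ ω, F n (X ω) ∂P) (∫ ω, F (ε ω) (X ω) ∂P) := by
  refine (hasSum_setIntegral_preimage_singleton hε hint).congr_fun fun n => ?_
  rw [setIntegral_congr_fun (hε (measurableSet_singleton n)) fun ω (hω : ε ω = n) => by rw [hω]]
  exact (((IndepFun_iff_Indep ε X P).mp hindep).setIntegral_eq_mul hε.comap_le hX.aemeasurable
    ⟨{n}, measurableSet_singleton n, rfl⟩ (hF n).aestronglyMeasurable).symm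

theorem integrable_natCast_of_integrable_sq (hε : Measurable ε)
    (hε2 : Integrable (fun ω => (ε ω : ℝ) ^ 2) P) : Integrable (fun ω => (ε ω : ℝ)) P :=
  hε2.mono' (measurable_from_top.comp hε).aestronglyMeasurable <| .of_forall fun ω => by
    rw [Real.norm_natCast]
    exact_mod_cast Nat.le_self_pow two_ne_zero (ε ω)

variable {Z Z' : ℕ → Ω → ℝ}

theorem measurable_randomSum (hε : Measurable ε) (hZ : ∀ r, Measurable (Z r)) :
    Measurable (randomSum ε Z) := by
  have h : Measurable fun p : ℕ × Ω => ∑ r ∈ range p.1, Z r p.2 :=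
    measurable_from_prod_countable_right fun n => Finset.measurable_sum (range n) fun r _ => hZ r
  exact h.comp (hε.prodMk measurable_id)

theorem integral_sum_range_of_integral_eq [IsProbabilityMeasure P] (hZ : ∀ r, Integrable (Z r) P)
    {b : ℝ} (hb : ∀ r, ∫ ω, Z r ω ∂P = b) (n : ℕ) :
    ∫ ω, ∑ r ∈ range n, Z r ω ∂P = n * b := by
  rw [integral_finsetSum _ fun r _ => hZ r]
  simp [hb]

theorem integral_sum_range_mul_sum_range
    (hZZ' : ∀ r s, Integrable (fun ω => Z r ω * Z' s ω) P) {a c : ℝ}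
    (hdiag : ∀ r, ∫ ω, Z r ω * Z' r ω ∂P = a)
    (hoff : ∀ r s, r ≠ s → ∫ ω, Z r ω * Z' s ω ∂P = c) (n : ℕ) :
    ∫ ω, (∑ r ∈ range n, Z r ω) * ∑ s ∈ range n, Z' s ω ∂P = n ^ 2 * c + n * (a - c) := by
  have hentry : ∀ r s, ∫ ω, Z r ω * Z' s ω ∂P = c + if r = s then a - c else 0 := by
    intro r s
    by_cases h : r = s
    · subst h; simp [hdiag]
    · simp [h, hoff r s h]
  simp_rw [sum_mul_sum]
  rw [integral_finsetSum _ fun r _ => integrable_finsetSum _ fun s _ => hZZ' r s]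
  simp_rw [integral_finsetSum _ fun s _ => hZZ' _ s, hentry, sum_add_distrib, sum_ite_eq]
  rw [sum_ite_of_true fun r hr => hr]
  simp only [sum_const, card_range, nsmul_eq_mul]
  ring

variable [IsProbabilityMeasure P]

theorem integral_randomSum (hε : Measurable ε) (hZ : ∀ r, Measurable (Z r))
    (hZ1 : ∀ r ω, |Z r ω| ≤ 1) (hindep : IndepFun ε (fun ω r => Z r ω) P)
    (hε1 : Integrable (fun ω => (ε ω : ℝ)) P) {b : ℝ} (hb : ∀ r, ∫ ω, Z r ω ∂P = b) :
    ∫ ω, randomSum ε Z ω ∂P = b * ∫ ω, (ε ω : ℝ) ∂P := by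
  have hint : Integrable (randomSum ε Z) P :=
    hε1.mono' (measurable_randomSum hε hZ).aestronglyMeasurable <|
      .of_forall (abs_randomSum_le hZ1)
  have hsum := hindep.hasSum_integral_comp hε (measurable_pi_lambda _ hZ)
    (F := fun n z => ∑ r ∈ range n, z r)
    (fun n => Finset.measurable_sum (range n) fun r _ => measurable_pi_apply r) hint
  have hZint : ∀ r, Integrable (Z r) P := fun r =>
    .of_bound (hZ r).aestronglyMeasurable 1 (.of_forall (hZ1 r))
  simp only [integral_sum_range_of_integral_eq hZint hb] at hsum
  refine hsum.unique
    (((hasSum_measureReal_preimage_singleton_mul hε hε1).mul_left b).congr_fun fun n => ?_)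
  ring

theorem integral_randomSum_mul_randomSum (hε : Measurable ε)
    (hZ : ∀ r, Measurable (Z r)) (hZ' : ∀ r, Measurable (Z' r))
    (hZ1 : ∀ r ω, |Z r ω| ≤ 1) (hZ'1 : ∀ r ω, |Z' r ω| ≤ 1)
    (hindep : IndepFun ε (fun ω r => (Z r ω, Z' r ω)) P)
    (hε2 : Integrable (fun ω => (ε ω : ℝ) ^ 2) P) {a c : ℝ}
    (hdiag : ∀ r, ∫ ω, Z r ω * Z' r ω ∂P = a)
    (hoff : ∀ r s, r ≠ s → ∫ ω, Z r ω * Z' s ω ∂P = c) :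
    ∫ ω, randomSum ε Z ω * randomSum ε Z' ω ∂P =
      c * ∫ ω, (ε ω : ℝ) ^ 2 ∂P + (a - c) * ∫ ω, (ε ω : ℝ) ∂P := by
  have hint : Integrable (fun ω => randomSum ε Z ω * randomSum ε Z' ω) P :=
    hε2.mono' ((measurable_randomSum hε hZ).mul
      (measurable_randomSum hε hZ')).aestronglyMeasurable <| .of_forall fun ω => by
        rw [Real.norm_eq_abs, abs_mul, sq]
        exact mul_le_mul (abs_randomSum_le hZ1 ω) (abs_randomSum_le hZ'1 ω) (abs_nonneg _)
          (Nat.cast_nonneg _)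
  have hsum := hindep.hasSum_integral_comp hε
    (measurable_pi_lambda _ fun r => (hZ r).prodMk (hZ' r))
    (F := fun n z => (∑ r ∈ range n, (z r).1) * ∑ r ∈ range n, (z r).2)
    (fun n => (Finset.measurable_sum (range n) fun r _ => (measurable_pi_apply r).fst).mul
      (Finset.measurable_sum (range n) fun r _ => (measurable_pi_apply r).snd)) hint
  have hZZ' : ∀ r s, Integrable (fun ω => Z r ω * Z' s ω) P := fun r s =>
    .of_bound ((hZ r).mul (hZ' s)).aestronglyMeasurable 1 <| .of_forall fun ω => by
      rw [Real.norm_eq_abs, abs_mul]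
      exact mul_le_one₀ (hZ1 r ω) (abs_nonneg _) (hZ'1 s ω)
  simp only [integral_sum_range_mul_sum_range hZZ' hdiag hoff] at hsum
  have hsq := hasSum_measureReal_preimage_singleton_mul (g := fun n => (n : ℝ) ^ 2) hε hε2
  have hlin := hasSum_measureReal_preimage_singleton_mul hε
    (integrable_natCast_of_integrable_sq hε hε2)
  refine hsum.unique (((hsq.mul_left c).add (hlin.mul_left (a - c))).congr_fun fun n => ?_)
  ring

theorem integral_randomSum_mul_sub_mul (hε : Measurable ε)
    (hZ : ∀ r, Measurable (Z r)) (hZ' : ∀ r, Measurable (Z' r))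
    (hZ1 : ∀ r ω, |Z r ω| ≤ 1) (hZ'1 : ∀ r ω, |Z' r ω| ≤ 1)
    (hindep : IndepFun ε (fun ω r => (Z r ω, Z' r ω)) P)
    (hε2 : Integrable (fun ω => (ε ω : ℝ) ^ 2) P) {a b b' : ℝ}
    (hb : ∀ r, ∫ ω, Z r ω ∂P = b) (hb' : ∀ r, ∫ ω, Z' r ω ∂P = b')
    (hdiag : ∀ r, ∫ ω, Z r ω * Z' r ω ∂P = a)
    (hoff : ∀ r s, r ≠ s → ∫ ω, Z r ω * Z' s ω ∂P = b * b') :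
    ∫ ω, randomSum ε Z ω * randomSum ε Z' ω ∂P
      - (∫ ω, randomSum ε Z ω ∂P) * ∫ ω, randomSum ε Z' ω ∂P =
      b * b' * variance (fun ω => (ε ω : ℝ)) P + (∫ ω, (ε ω : ℝ) ∂P) * (a - b * b') := by
  have hε1 := integrable_natCast_of_integrable_sq hε hε2
  have hindepZ : IndepFun ε (fun ω r => Z r ω) P :=
    hindep.comp (φ := id) (ψ := fun (z : ℕ → ℝ × ℝ) r => (z r).1) measurable_id
      (measurable_pi_lambda _ fun r => (measurable_pi_apply r).fst)
  have hindepZ' : IndepFun ε (fun ω r => Z' r ω) P :=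
    hindep.comp (φ := id) (ψ := fun (z : ℕ → ℝ × ℝ) r => (z r).2) measurable_id
      (measurable_pi_lambda _ fun r => (measurable_pi_apply r).snd)
  have hεL2 : MemLp (fun ω => (ε ω : ℝ)) 2 P :=
    (memLp_two_iff_integrable_sq (measurable_from_top.comp hε).aestronglyMeasurable).2 hε2
  rw [integral_randomSum_mul_randomSum hε hZ hZ' hZ1 hZ'1 hindep hε2 hdiag hoff,
    integral_randomSum hε hZ hZ1 hindepZ hε1 hb, integral_randomSum hε hZ' hZ'1 hindepZ' hε1 hb',
    variance_eq_sub hεL2]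
  simp only [Pi.pow_apply]
  ring

end RandomSum

/-- Covariance of two binomial thinnings applied to the same innovation. -/
theorem cov_two_thinnings
    {Ω : Type*} [MeasurableSpace Ω] (P : Measure Ω) [IsProbabilityMeasure P]
    (ε : Ω → ℕ) (hεmeas : Measurable ε)
    (hεL2 : Integrable (fun ω => ((ε ω : ℝ)) ^ 2) P)
    (με : ℝ) (hμε : με = ∫ ω, (ε ω : ℝ) ∂P)
    (σε2 : ℝ) (hσε2 : σε2 = variance (fun ω => (ε ω : ℝ)) P)
    -- the i.i.d. pairs of counting series, independent of ε
    (W : ℕ → Ω → ℕ × ℕ) (hWmeas : ∀ r, Measurable (W r))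
    (hW01 : ∀ r ω, (W r ω).1 ≤ 1 ∧ (W r ω).2 ≤ 1)
    (hWiid : iIndepFun W P)
    (hWid : ∀ r, Measure.map (W r) P = Measure.map (W 0) P)
    (hindep : IndepFun ε (fun ω (r : ℕ) => W r ω) P)
    (β β' : ℝ) (hβmem : β ∈ Set.Icc (0 : ℝ) 1) (hβ'mem : β' ∈ Set.Icc (0 : ℝ) 1)
    (hβ : P {ω | (W 0 ω).1 = 1} = ENNReal.ofReal β)
    (hβ' : P {ω | (W 0 ω).2 = 1} = ENNReal.ofReal β')
    -- the two thinnings β ∘ ε and β' ∘ ε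
    (S S' : Ω → ℕ)
    (hS : ∀ ω, S ω = ∑ r ∈ Finset.range (ε ω), (W r ω).1)
    (hS' : ∀ ω, S' ω = ∑ r ∈ Finset.range (ε ω), (W r ω).2) :
    (∫ ω, (S ω : ℝ) * (S' ω : ℝ) ∂P)
      - (∫ ω, (S ω : ℝ) ∂P) * (∫ ω, (S' ω : ℝ) ∂P) =
      β * β' * σε2 + με * ((P {ω | W 0 ω = (1, 1)}).toReal - β * β') := by
  have hcast : Measurable fun k : ℕ => (k : ℝ) := measurable_from_top
  have hZ : ∀ r, Measurable fun ω => ((W r ω).1 : ℝ) := fun r => hcast.comp (hWmeas r).fst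
  have hZ' : ∀ r, Measurable fun ω => ((W r ω).2 : ℝ) := fun r => hcast.comp (hWmeas r).snd
  have hZ1 : ∀ r ω, |((W r ω).1 : ℝ)| ≤ 1 := fun r ω => by simpa using (hW01 r ω).1
  have hZ'1 : ∀ r ω, |((W r ω).2 : ℝ)| ≤ 1 := fun r ω => by simpa using (hW01 r ω).2
  have hident : ∀ r, IdentDistrib (W r) (W 0) P P := fun r =>
    ⟨(hWmeas r).aemeasurable, (hWmeas 0).aemeasurable, hWid r⟩
  have hEZ : ∀ r, ∫ ω, ((W r ω).1 : ℝ) ∂P = β := fun r =>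
    ((hident r).comp measurable_fst).integral_natCast_eq_measureReal (hWmeas 0).fst
      (fun ω => (hW01 0 ω).1) |>.trans <| by
        simp only [Function.comp_apply, measureReal_def, hβ, ENNReal.toReal_ofReal hβmem.1]
  have hEZ' : ∀ r, ∫ ω, ((W r ω).2 : ℝ) ∂P = β' := fun r =>
    ((hident r).comp measurable_snd).integral_natCast_eq_measureReal (hWmeas 0).snd
      (fun ω => (hW01 0 ω).2) |>.trans <| by
        simp only [Function.comp_apply, measureReal_def, hβ', ENNReal.toReal_ofReal hβ'mem.1]
  have hdiag : ∀ r, ∫ ω, ((W r ω).1 : ℝ) * ((W r ω).2 : ℝ) ∂P = P.real {ω | W 0 ω = (1, 1)} :=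
    fun r => (hident r).integral_fst_mul_snd_eq_measureReal (hWmeas 0) (hW01 0)
  have hoff : ∀ r s, r ≠ s → ∫ ω, ((W r ω).1 : ℝ) * ((W s ω).2 : ℝ) ∂P = β * β' :=
    fun r s hrs => by rw [hWiid.integral_fst_mul_snd_of_ne hWmeas hrs, hEZ, hEZ']
  have hindepZ : IndepFun ε (fun ω r => (((W r ω).1 : ℝ), ((W r ω).2 : ℝ))) P :=
    hindep.comp (φ := id) (ψ := fun (w : ℕ → ℕ × ℕ) r => (((w r).1 : ℝ), ((w r).2 : ℝ)))
      measurable_id (measurable_pi_lambda _ fun r =>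
        (hcast.comp (measurable_pi_apply r).fst).prodMk (hcast.comp (measurable_pi_apply r).snd))
  simp only [hS, hS', Nat.cast_sum, hμε, hσε2]
  exact integral_randomSum_mul_sub_mul hεmeas hZ hZ' hZ1 hZ'1 hindepZ hεL2 hEZ hEZ' hdiag hoff
end

section
/- For the INMA(q1,q2) random field with Poisson-distributed innovations ε_{s,t} ~ Poi(μ_ε), μ_ε > 0, each observation is Poisson-distributed: X_{s,t} ~ Poi(μ_ε β_•); equivalently, E[u^{X_{s,t}}] = exp(μ_ε β_• (u − 1)) for all u ∈ [0,1]. (Example: Poisson INMA marginal.) -/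
/-!
Each summand `β_ij ∘ ε_{s-i,t-j}` is a binomial thinning of a Poisson(μ_ε) count: given
`ε = k` it is Binomial(k, β_ij), and mixing these binomials over the Poisson weights gives
Poisson(μ_ε β_ij). The summands read distinct innovations and disjoint parts of the counting
series, hence are independent, and a finite sum of independent Poisson variables is Poisson
with the summed rate μ_ε β_•; its generating function is `exp (μ_ε β_• (u - 1))`.
-/

open MeasureTheory ProbabilityTheory Finset
open scoped NNReal ENNReal

lemma choose_succ_succ_mul_pow_mul_pow (k n : ℕ) (b : ℝ) :
    ((k + 1).choose (n + 1) : ℝ) * b ^ (n + 1) * (1 - b) ^ (k - n) =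
      k.choose (n + 1) * b ^ (n + 1) * (1 - b) ^ (k - (n + 1)) * (1 - b) +
        k.choose n * b ^ n * (1 - b) ^ (k - n) * b := by
  rcases lt_trichotomy n k with hnk | rfl | hkn
  · obtain ⟨m, rfl⟩ := Nat.exists_eq_add_of_lt hnk
    rw [Nat.choose_succ_succ', show n + m + 1 - n = m + 1 by omega,
      show n + m + 1 - (n + 1) = m by omega]
    push_cast
    ring
  · simp [pow_succ]
  · simp [Nat.choose_eq_zero_of_lt hkn, Nat.choose_eq_zero_of_lt (Nat.lt_succ_of_lt hkn),
      Nat.choose_eq_zero_of_lt (Nat.succ_lt_succ hkn)]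

lemma hasSum_poisson_mul_binomial (μ b : ℝ) (n : ℕ) :
    HasSum (fun k : ℕ ↦
        Real.exp (-μ) * μ ^ k / k.factorial * (k.choose n * b ^ n * (1 - b) ^ (k - n)))
      (Real.exp (-(μ * b)) * (μ * b) ^ n / n.factorial) := by
  have hshift (k : ℕ) : Real.exp (-μ) * μ ^ (k + n) / (k + n).factorial *
      ((k + n).choose n * b ^ n * (1 - b) ^ (k + n - n)) =
        Real.exp (-μ) * (μ * b) ^ n / n.factorial * ((μ * (1 - b)) ^ k / k.factorial) := by
    have hfac : ((k + n).choose n : ℝ) * n.factorial * k.factorial = (k + n).factorial := by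
      exact_mod_cast Nat.add_sub_cancel k n ▸
        Nat.choose_mul_factorial_mul_factorial (Nat.le_add_left n k)
    rw [Nat.add_sub_cancel, mul_pow, mul_pow]
    field_simp
    rw [← hfac]
    ring
  have hexp : HasSum (fun k : ℕ ↦ (μ * (1 - b)) ^ k / k.factorial) (Real.exp (μ * (1 - b))) := by
    rw [Real.exp_eq_exp_ℝ]
    exact NormedSpace.expSeries_div_hasSum_exp _
  have hvalue : Real.exp (-μ) * (μ * b) ^ n / n.factorial * Real.exp (μ * (1 - b)) =
      Real.exp (-(μ * b)) * (μ * b) ^ n / n.factorial := by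
    rw [show -(μ * b) = -μ + μ * (1 - b) by ring, Real.exp_add]
    ring
  rw [← hasSum_nat_add_iff' n, sum_eq_zero fun k hk ↦ by
    rw [Nat.choose_eq_zero_of_lt (mem_range.mp hk)]; simp, sub_zero, ← hvalue]
  simp_rw [hshift]
  exact hexp.mul_left _

lemma measurable_sum_range_s10 {Ω M : Type*} [MeasurableSpace Ω] [AddCommMonoid M] [MeasurableSpace M]
    [MeasurableAdd₂ M] {N : Ω → ℕ} {B : ℕ → Ω → M} (hN : Measurable N)
    (hB : ∀ r, Measurable (B r)) : Measurable fun ω ↦ ∑ r ∈ range (N ω), B r ω :=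
  (measurable_from_prod_countable_left (f := fun x : Ω × ℕ ↦ ∑ r ∈ range x.2, B r x.1)
    fun k ↦ Finset.measurable_sum (range k) fun r _ ↦ hB r).comp (measurable_id.prodMk hN)

namespace ProbabilityTheory

variable {Ω : Type*} [MeasurableSpace Ω] {P : Measure Ω}

lemma iIndepFun.sumElim {ι κ C : Type*} [MeasurableSpace C] {f : ι → Ω → C} {g : κ → Ω → C}
    (hf : iIndepFun f P) (hg : iIndepFun g P)
    (hfg : IndepFun (fun ω i ↦ f i ω) (fun ω k ↦ g k ω) P) :
    iIndepFun (Sum.elim f g) P := by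
  rw [iIndepFun_iff_measure_inter_preimage_eq_mul] at hf hg ⊢
  intro S sets hsets
  have hsplit : (⋂ t ∈ S, Sum.elim f g t ⁻¹' sets t) =
      (fun ω i ↦ f i ω) ⁻¹' (⋂ i ∈ S.toLeft, Function.eval i ⁻¹' sets (.inl i)) ∩
        (fun ω k ↦ g k ω) ⁻¹' (⋂ k ∈ S.toRight, Function.eval k ⁻¹' sets (.inr k)) := by
    ext ω
    simp [Sum.forall]
  rw [hsplit, hfg.measure_inter_preimage_eq_mul _ _
      (Finset.measurableSet_biInter _ fun i hi ↦
        measurable_pi_apply i (hsets _ (by simpa using hi)))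
      (Finset.measurableSet_biInter _ fun k hk ↦
        measurable_pi_apply k (hsets _ (by simpa using hk))),
    prod_sum_eq_prod_toLeft_mul_prod_toRight]
  simp only [Set.preimage_iInter₂]
  exact congr_arg₂ (· * ·) (hf _ (sets := sets ∘ .inl) fun i hi ↦ hsets _ (by simpa using hi))
    (hg _ (sets := sets ∘ .inr) fun k hk ↦ hsets _ (by simpa using hk))

lemma iIndepFun.curry {ι κ C : Type*} [MeasurableSpace C] {X : ι → κ → Ω → C}
    (hX : ∀ i k, Measurable (X i k)) (h : iIndepFun (fun p : ι × κ ↦ X p.1 p.2) P) :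
    iIndepFun (fun i ω k ↦ X i k ω) P := by
  have := h.isProbabilityMeasure
  have (i : ι) (k : κ) : IsProbabilityMeasure (P.map (X i k)) :=
    Measure.isProbabilityMeasure_map (hX i k).aemeasurable
  have hrow (i : ι) : P.map (fun ω k ↦ X i k ω) = Measure.infinitePi fun k ↦ P.map (X i k) :=
    (h.precomp (Prod.mk_right_injective i)).map_fun_eq_infinitePi_map fun k ↦ hX i k
  have hall : P.map (fun ω (p : ι × κ) ↦ X p.1 p.2 ω) =
      Measure.infinitePi fun p ↦ P.map (X p.1 p.2) :=
    h.map_fun_eq_infinitePi_map fun p ↦ hX p.1 p.2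
  rw [iIndepFun_iff_map_fun_eq_infinitePi_map (fun i ↦ by fun_prop)]
  simp_rw [hrow]
  rw [← Measure.infinitePi_map_curry, ← hall, Measure.map_map (by fun_prop) (by fun_prop)]
  rfl

lemma iIndepFun.prodMk_of_indepFun {ι κ C : Type*} [MeasurableSpace C] {f : ι → Ω → C}
    {g : ι → κ → Ω → C} (hf_meas : ∀ i, Measurable (f i)) (hg_meas : ∀ i k, Measurable (g i k))
    (hf : iIndepFun f P) (hg : iIndepFun (fun p : ι × κ ↦ g p.1 p.2) P)
    (hfg : IndepFun (fun ω i ↦ f i ω) (fun ω (p : ι × κ) ↦ g p.1 p.2 ω) P) :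
    iIndepFun (fun i ω ↦ (f i ω, fun k ↦ g i k ω)) P := by
  let e : ι × Option κ → ι ⊕ ι × κ := fun x ↦ x.2.elim (.inl x.1) fun k ↦ .inr (x.1, k)
  have he : Function.Injective e := by
    rintro ⟨i, _ | k⟩ ⟨j, _ | l⟩ h <;> simp_all [e]
  have hmeas (i : ι) (o : Option κ) :
      Measurable (Sum.elim f (fun p : ι × κ ↦ g p.1 p.2) (e (i, o))) := by
    cases o <;> simp [e, hf_meas, hg_meas]
  exact (((hf.sumElim hg hfg).precomp he).curry hmeas).comp
    (fun _ v ↦ (v none, fun k ↦ v (some k))) fun _ ↦ by fun_prop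

lemma iIndepFun_sum_range_of_indepFun {ι : Type*} {N : ι → Ω → ℕ} {B : ι → ℕ → Ω → ℕ}
    (hN_meas : ∀ i, Measurable (N i)) (hB_meas : ∀ i r, Measurable (B i r))
    (hN : iIndepFun N P) (hB : iIndepFun (fun q : ι × ℕ ↦ B q.1 q.2) P)
    (hNB : IndepFun (fun ω i ↦ N i ω) (fun ω (q : ι × ℕ) ↦ B q.1 q.2 ω) P) :
    iIndepFun (fun i ω ↦ ∑ r ∈ range (N i ω), B i r ω) P :=
  (iIndepFun.prodMk_of_indepFun hN_meas hB_meas hN hB hNB).comp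
    (fun _ x ↦ ∑ r ∈ range x.1, x.2 r) fun _ ↦
      measurable_sum_range_s10 measurable_fst fun r ↦ by fun_prop

lemma hasLaw_of_measure_preimage_singleton {α : Type*} [MeasurableSpace α] [Countable α]
    [MeasurableSingletonClass α] {X : Ω → α} {μ : Measure α} (hX : Measurable X)
    (h : ∀ a, P (X ⁻¹' {a}) = μ {a}) : HasLaw X μ P where
  aemeasurable := hX.aemeasurable
  map_eq := Measure.ext_of_singleton fun a ↦ by
    rw [Measure.map_apply hX (measurableSet_singleton a), h]

lemma poissonMeasure_zero : poissonMeasure 0 = Measure.dirac 0 :=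
  Measure.ext_of_singleton fun n ↦ by
    rcases n with _ | n <;> simp [poissonMeasure_singleton]

lemma iIndepFun.hasLaw_sum_poissonMeasure [IsProbabilityMeasure P] {ι : Type*}
    {X : ι → Ω → ℕ} {r : ι → ℝ≥0} (hX_meas : ∀ i, Measurable (X i)) (hX : iIndepFun X P)
    (s : Finset ι) (hXr : ∀ i ∈ s, HasLaw (X i) (poissonMeasure (r i)) P) :
    HasLaw (∑ i ∈ s, X i) (poissonMeasure (∑ i ∈ s, r i)) P := by
  classical
  induction s using Finset.induction_on with
  | empty => simpa [poissonMeasure_zero] using hasLaw_dirac_of_ae_eq (X := 0) (x := 0) (by rfl)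
  | insert i s hi ih =>
    rw [sum_insert hi, sum_insert hi]
    exact (hX.indepFun_finsetSum_of_notMem hX_meas hi).symm.hasLaw_add_poissonMeasure
      (hXr i (mem_insert_self i s)) (ih fun j hj ↦ hXr j (mem_insert_of_mem hj))

lemma integral_pow_poissonMeasure (r : ℝ≥0) (u : ℝ) :
    ∫ n, u ^ n ∂poissonMeasure r = Real.exp (r * (u - 1)) := by
  have hexp : ∑' n : ℕ, ((r : ℝ) * u) ^ n / n.factorial = Real.exp (r * u) := by
    rw [Real.exp_eq_exp_ℝ, NormedSpace.exp_eq_tsum_div]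
  rw [integral_poissonMeasure]
  simp_rw [smul_eq_mul, div_mul_eq_mul_div, mul_assoc, ← mul_pow, mul_div_assoc]
  rw [tsum_mul_left, hexp, ← Real.exp_add]
  ring_nf

lemma IndepFun.measure_add_eq_zero {X Y : Ω → ℕ} (hXY : IndepFun X Y P) :
    P {ω | X ω + Y ω = 0} = P {ω | X ω = 0} * P {ω | Y ω = 0} := by
  simp_rw [Nat.add_eq_zero_iff]
  exact hXY.measure_inter_preimage_eq_mul _ _ (measurableSet_singleton 0)
    (measurableSet_singleton 0)

lemma IndepFun.measure_add_eq_succ {X Y : Ω → ℕ} (hX_meas : Measurable X)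
    (hY_meas : Measurable Y) (hXY : IndepFun X Y P) (hY_le : ∀ ω, Y ω ≤ 1) (n : ℕ) :
    P {ω | X ω + Y ω = n + 1} =
      P {ω | X ω = n + 1} * P {ω | Y ω = 0} + P {ω | X ω = n} * P {ω | Y ω = 1} := by
  have hsplit : {ω | X ω + Y ω = n + 1} =
      ({ω | X ω = n + 1} ∩ {ω | Y ω = 0}) ∪ ({ω | X ω = n} ∩ {ω | Y ω = 1}) := by
    ext ω
    have := hY_le ω
    simp only [Set.mem_ofPred_eq, Set.mem_union, Set.mem_inter_iff]
    omega
  have hdisj : Disjoint ({ω | X ω = n + 1} ∩ {ω | Y ω = 0}) ({ω | X ω = n} ∩ {ω | Y ω = 1}) :=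
    Set.disjoint_left.mpr fun ω h₁ h₂ ↦ by simp_all
  rw [hsplit, measure_union hdisj ((hX_meas (measurableSet_singleton n)).inter
      (hY_meas (measurableSet_singleton 1)))]
  exact congr_arg₂ (· + ·)
    (hXY.measure_inter_preimage_eq_mul _ _ (measurableSet_singleton _) (measurableSet_singleton 0))
    (hXY.measure_inter_preimage_eq_mul _ _ (measurableSet_singleton _) (measurableSet_singleton 1))

lemma iIndepFun.measure_sum_range_eq_binomial [IsProbabilityMeasure P] {B : ℕ → Ω → ℕ}
    (hB_meas : ∀ r, Measurable (B r)) (hB_le : ∀ r ω, B r ω ≤ 1) (hB : iIndepFun B P)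
    {b : ℝ≥0} (hb : b ≤ 1) (hBb : ∀ r, P {ω | B r ω = 1} = b) (k n : ℕ) :
    P {ω | ∑ r ∈ range k, B r ω = n} =
      ENNReal.ofReal (k.choose n * b ^ n * (1 - b) ^ (k - n)) := by
  have hb' : (0 : ℝ) ≤ 1 - b := sub_nonneg.mpr (by exact_mod_cast hb)
  have hB0 (r : ℕ) : P {ω | B r ω = 0} = ENNReal.ofReal (1 - b) := by
    have hcompl : {ω | B r ω = 0} = {ω | B r ω = 1}ᶜ := by
      ext ω
      have := hB_le r ω
      simp only [Set.mem_ofPred_eq, Set.mem_compl_iff]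
      omega
    rw [hcompl, prob_compl_eq_one_sub (s := {ω | B r ω = 1})
        (hB_meas r (measurableSet_singleton 1)), hBb,
      ENNReal.ofReal_sub _ b.coe_nonneg, ENNReal.ofReal_one, ENNReal.ofReal_coe_nnreal]
  induction k generalizing n with
  | zero => rcases n with _ | n <;> simp
  | succ k ih =>
    have hind : IndepFun (fun ω ↦ ∑ r ∈ range k, B r ω) (B k) P := by
      simpa only [← Finset.sum_apply] using hB.indepFun_finsetSum_of_notMem hB_meas (by simp)
    simp_rw [sum_range_succ]
    rcases n with _ | n
    · rw [hind.measure_add_eq_zero, ih, hB0, ← ENNReal.ofReal_mul (by positivity)]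
      simp [pow_succ]
    · rw [hind.measure_add_eq_succ (by fun_prop) (hB_meas k) (hB_le k), ih, ih, hB0, hBb,
        ← ENNReal.ofReal_coe_nnreal, ← ENNReal.ofReal_mul (by positivity),
        ← ENNReal.ofReal_mul (by positivity), ← ENNReal.ofReal_add (by positivity)
          (by positivity), Nat.add_sub_add_right, choose_succ_succ_mul_pow_mul_pow]

lemma hasLaw_sum_range_poissonMeasure [IsProbabilityMeasure P] {N : Ω → ℕ} {B : ℕ → Ω → ℕ}
    {μ b : ℝ≥0} (hN_meas : Measurable N) (hN : HasLaw N (poissonMeasure μ) P)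
    (hB_meas : ∀ r, Measurable (B r)) (hB_le : ∀ r ω, B r ω ≤ 1) (hB : iIndepFun B P)
    (hb : b ≤ 1) (hBb : ∀ r, P {ω | B r ω = 1} = b) (hNB : IndepFun N (fun ω r ↦ B r ω) P) :
    HasLaw (fun ω ↦ ∑ r ∈ range (N ω), B r ω) (poissonMeasure (μ * b)) P := by
  have hb' : (0 : ℝ) ≤ 1 - b := sub_nonneg.mpr (by exact_mod_cast hb)
  have hS_meas (k : ℕ) : Measurable fun ω ↦ ∑ r ∈ range k, B r ω := by fun_prop
  refine hasLaw_of_measure_preimage_singleton (measurable_sum_range_s10 hN_meas hB_meas) fun n ↦ ?_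
  have hsplit : (fun ω ↦ ∑ r ∈ range (N ω), B r ω) ⁻¹' {n} =
      ⋃ k, N ⁻¹' {k} ∩ (fun ω ↦ ∑ r ∈ range k, B r ω) ⁻¹' {n} := by
    ext ω
    simp
  have hterm (k : ℕ) : P (N ⁻¹' {k} ∩ (fun ω ↦ ∑ r ∈ range k, B r ω) ⁻¹' {n}) =
      ENNReal.ofReal
        (Real.exp (-μ) * μ ^ k / k.factorial * (k.choose n * b ^ n * (1 - b) ^ (k - n))) := by
    have hNS : IndepFun N (fun ω ↦ ∑ r ∈ range k, B r ω) P :=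
      hNB.comp (ψ := fun v : ℕ → ℕ ↦ ∑ r ∈ range k, v r) measurable_id (by fun_prop)
    rw [hNS.measure_inter_preimage_eq_mul _ _ (measurableSet_singleton k)
      (measurableSet_singleton n), ← Measure.map_apply hN_meas (measurableSet_singleton k),
      hN.map_eq, poissonMeasure_singleton,
      ENNReal.ofReal_mul (by positivity),
      ← hB.measure_sum_range_eq_binomial hB_meas hB_le hb hBb k n]
    rfl
  have hdisj : Pairwise (Function.onFun Disjoint fun k ↦
      N ⁻¹' {k} ∩ (fun ω ↦ ∑ r ∈ range k, B r ω) ⁻¹' {n}) :=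
    fun k l hkl ↦ Set.disjoint_left.mpr fun ω h₁ h₂ ↦ hkl (h₁.1.symm.trans h₂.1)
  rw [hsplit, measure_iUnion hdisj fun k ↦ (hN_meas (measurableSet_singleton k)).inter
    (hS_meas k (measurableSet_singleton n)), tsum_congr hterm,
    ← ENNReal.ofReal_tsum_of_nonneg (fun k ↦ by positivity)
      (hasSum_poisson_mul_binomial μ b n).summable,
    (hasSum_poisson_mul_binomial μ b n).tsum_eq, poissonMeasure_singleton]
  push_cast
  rfl

-- `κ` indexes sites and `ι` lags: lag `i` thins the innovation at site `p i` with coordinate `i`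
-- of that site's counting series (for the INMA field, `p (i, j) = (s - i, t - j)`).
theorem hasLaw_sum_thinning_poissonMeasure [IsProbabilityMeasure P] {κ ι : Type*}
    {ε : κ → Ω → ℕ} {Z : κ → ℕ → Ω → ι → ℕ} {p : ι → κ} (hp : Function.Injective p)
    (hε_meas : ∀ k, Measurable (ε k)) (hZ_meas : ∀ k r, Measurable (Z k r))
    (hZ_le : ∀ k r ω i, Z k r ω i ≤ 1) (hε : iIndepFun ε P)
    (hZ : iIndepFun (fun q : κ × ℕ ↦ Z q.1 q.2) P)
    (hεZ : IndepFun (fun ω k ↦ ε k ω) (fun ω (q : κ × ℕ) ↦ Z q.1 q.2 ω) P)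
    {μ : ℝ≥0} (hε_law : ∀ k, HasLaw (ε k) (poissonMeasure μ) P) (s : Finset ι) {b : ι → ℝ≥0}
    (hb : ∀ i ∈ s, b i ≤ 1) (hZb : ∀ i ∈ s, ∀ r, P {ω | Z (p i) r ω i = 1} = b i) :
    HasLaw (fun ω ↦ ∑ i ∈ s, ∑ r ∈ range (ε (p i) ω), Z (p i) r ω i)
      (poissonMeasure (μ * ∑ i ∈ s, b i)) P := by
  have hZ_row : iIndepFun (fun q : ι × ℕ ↦ fun ω ↦ Z (p q.1) q.2 ω q.1) P :=
    (hZ.precomp (g := fun q : ι × ℕ ↦ (p q.1, q.2)) fun a b hab ↦ by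
        simp only [Prod.mk.injEq] at hab
        exact Prod.ext (hp hab.1) hab.2).comp
      (fun q v ↦ v q.1) fun q ↦ measurable_pi_apply q.1
  have hεZ_row : IndepFun (fun ω i ↦ ε (p i) ω) (fun ω (q : ι × ℕ) ↦ Z (p q.1) q.2 ω q.1) P :=
    hεZ.comp (φ := fun (e : κ → ℕ) i ↦ e (p i))
      (ψ := fun (z : κ × ℕ → ι → ℕ) (q : ι × ℕ) ↦ z (p q.1, q.2) q.1) (by fun_prop) (by fun_prop)
  have hY_indep : iIndepFun (fun i ω ↦ ∑ r ∈ range (ε (p i) ω), Z (p i) r ω i) P :=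
    iIndepFun_sum_range_of_indepFun (B := fun i r ω ↦ Z (p i) r ω i)
      (fun _ ↦ hε_meas _) (fun _ _ ↦ by fun_prop) (hε.precomp hp) hZ_row hεZ_row
  have hY_law (i : ι) (hi : i ∈ s) : HasLaw (fun ω ↦ ∑ r ∈ range (ε (p i) ω), Z (p i) r ω i)
      (poissonMeasure (μ * b i)) P :=
    hasLaw_sum_range_poissonMeasure (hε_meas _) (hε_law _) (fun _ ↦ by fun_prop)
      (fun r ω ↦ hZ_le _ r ω i) (hZ_row.precomp (Prod.mk_right_injective i)) (hb i hi) (hZb i hi)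
      (hεZ_row.comp (φ := fun (e : ι → ℕ) ↦ e i) (ψ := fun (z : ι × ℕ → ℕ) r ↦ z (i, r))
        (by fun_prop) (by fun_prop))
  rw [mul_sum]
  exact (hY_indep.hasLaw_sum_poissonMeasure
    (fun i ↦ measurable_sum_range_s10 (hε_meas _) fun r ↦ by fun_prop) s hY_law).congr
      (.of_forall fun ω ↦ by rw [Finset.sum_apply])

end ProbabilityTheory

theorem poisson_inma_marginal_general
    {Ω : Type*} [MeasurableSpace Ω] (P : Measure Ω) [IsProbabilityMeasure P]
    (q1 q2 : ℕ)
    (β : ℕ → ℕ → ℝ)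
    (hβ : ∀ i ≤ q1, ∀ j ≤ q2, β i j ∈ Set.Icc (0 : ℝ) 1)
    -- the i.i.d. Poisson(με) innovations
    (ε : ℤ × ℤ → Ω → ℕ) (hεmeas : ∀ p, Measurable (ε p))
    (hεiid : iIndepFun ε P)
    (με : ℝ) (hμε : 0 < με)
    (hεPoi : ∀ p n, P {ω | ε p ω = n} =
      ENNReal.ofReal (Real.exp (-με) * με ^ n / n.factorial))
    -- the counting-series vectors, i.i.d., with {0,1}-valued components
    (Z : ℤ × ℤ → ℕ → Ω → ℕ × ℕ → ℕ)
    (hZmeas : ∀ p r, Measurable (Z p r))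
    (hZ01 : ∀ p r ω ij, Z p r ω ij ≤ 1)
    (hZiid : iIndepFun
      (fun pr : (ℤ × ℤ) × ℕ => Z pr.1 pr.2) P)
    (hZβ : ∀ p r, ∀ i ≤ q1, ∀ j ≤ q2,
      P {ω | Z p r ω (i, j) = 1} = ENNReal.ofReal (β i j))
    -- the whole thinning family is independent of the innovation family
    (hindep : IndepFun (fun ω p => ε p ω)
      (fun ω (pr : (ℤ × ℤ) × ℕ) => Z pr.1 pr.2 ω) P)
    -- the INMA(q1,q2) random field
    (X : ℤ → ℤ → Ω → ℕ)
    (hX : ∀ s t ω, X s t ω =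
      ∑ i ∈ range (q1 + 1), ∑ j ∈ range (q2 + 1),
        ∑ r ∈ range (ε (s - (i : ℤ), t - (j : ℤ)) ω),
          Z (s - (i : ℤ), t - (j : ℤ)) r ω (i, j))
    (s t : ℤ) :
    (∀ n : ℕ, P {ω | X s t ω = n} =
      ENNReal.ofReal (Real.exp (-(με * ∑ i ∈ range (q1 + 1), ∑ j ∈ range (q2 + 1), β i j))
        * (με * ∑ i ∈ range (q1 + 1), ∑ j ∈ range (q2 + 1), β i j) ^ n / n.factorial)) ∧
    (∀ u ∈ Set.Icc (0 : ℝ) 1,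
      ∫ ω, u ^ X s t ω ∂P =
        Real.exp (με * (∑ i ∈ range (q1 + 1), ∑ j ∈ range (q2 + 1), β i j) * (u - 1))) := by
  have hβ' (ij : ℕ × ℕ) (hij : ij ∈ range (q1 + 1) ×ˢ range (q2 + 1)) :
      ij.1 ≤ q1 ∧ ij.2 ≤ q2 ∧ β ij.1 ij.2 ∈ Set.Icc (0 : ℝ) 1 := by
    simp only [mem_product, mem_range, Nat.lt_succ_iff] at hij
    exact ⟨hij.1, hij.2, hβ _ hij.1 _ hij.2⟩
  have hp : Function.Injective fun ij : ℕ × ℕ ↦ (s - (ij.1 : ℤ), t - (ij.2 : ℤ)) :=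
    fun a b hab ↦ by
      simp only [Prod.mk.injEq, sub_right_inj, Nat.cast_inj] at hab
      exact Prod.ext hab.1 hab.2
  have hε_law (k : ℤ × ℤ) : HasLaw (ε k) (poissonMeasure με.toNNReal) P :=
    hasLaw_of_measure_preimage_singleton (hεmeas k) fun n ↦ by
      rw [poissonMeasure_singleton, Real.coe_toNNReal _ hμε.le]
      exact hεPoi k n
  have hX_law : HasLaw (X s t) _ P :=
    (hasLaw_sum_thinning_poissonMeasure hp hεmeas hZmeas hZ01 hεiid hZiid hindep hε_law _
      (fun ij hij ↦ Real.toNNReal_le_one.mpr (hβ' ij hij).2.2.2)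
      fun ij hij r ↦ hZβ _ r _ (hβ' ij hij).1 _ (hβ' ij hij).2.1).congr
        (.of_forall fun ω ↦ by rw [hX, ← sum_product'])
  have hrate : ((με.toNNReal * ∑ ij ∈ range (q1 + 1) ×ˢ range (q2 + 1),
      (β ij.1 ij.2).toNNReal : ℝ≥0) : ℝ) =
        με * ∑ i ∈ range (q1 + 1), ∑ j ∈ range (q2 + 1), β i j := by
    rw [NNReal.coe_mul, Real.coe_toNNReal _ hμε.le, NNReal.coe_sum, sum_product]
    exact congrArg _ (sum_congr rfl fun i hi ↦ sum_congr rfl fun j hj ↦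
      Real.coe_toNNReal _ (hβ' (i, j) (mem_product.mpr ⟨hi, hj⟩)).2.2.1)
  refine ⟨fun n ↦ ?_, fun u _ ↦ ?_⟩
  · rw [← hrate, ← poissonMeasure_singleton]
    exact hX_law.measure_eq (measurableSet_singleton n)
  · rw [← hrate, ← integral_pow_poissonMeasure]
    exact hX_law.integral_comp (f := fun n : ℕ ↦ u ^ n) (by fun_prop)

/-- Poisson INMA(q1,q2): the observations are Poisson(μ_ε β_•) distributed. -/
theorem poisson_inma_marginal
    {Ω : Type*} [MeasurableSpace Ω] (P : Measure Ω) [IsProbabilityMeasure P]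
    (q1 q2 : ℕ) (hq : 1 ≤ q1 + q2)
    (β : ℕ → ℕ → ℝ)
    (hβ : ∀ i ≤ q1, ∀ j ≤ q2, β i j ∈ Set.Icc (0 : ℝ) 1)
    -- the i.i.d. Poisson(με) innovations
    (ε : ℤ × ℤ → Ω → ℕ) (hεmeas : ∀ p, Measurable (ε p))
    (hεiid : iIndepFun ε P)
    (με : ℝ) (hμε : 0 < με)
    (hεPoi : ∀ p n, P {ω | ε p ω = n} =
      ENNReal.ofReal (Real.exp (-με) * με ^ n / n.factorial))
    -- the counting-series vectors, i.i.d., with {0,1}-valued components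
    (Z : ℤ × ℤ → ℕ → Ω → ℕ × ℕ → ℕ)
    (hZmeas : ∀ p r, Measurable (Z p r))
    (hZ01 : ∀ p r ω ij, Z p r ω ij ≤ 1)
    (hZiid : iIndepFun
      (fun pr : (ℤ × ℤ) × ℕ => Z pr.1 pr.2) P)
    (hZid : ∀ p r, Measure.map (Z p r) P = Measure.map (Z (0, 0) 0) P)
    (hZβ : ∀ p r, ∀ i ≤ q1, ∀ j ≤ q2,
      P {ω | Z p r ω (i, j) = 1} = ENNReal.ofReal (β i j))
    -- the whole thinning family is independent of the innovation family
    (hindep : IndepFun (fun ω p => ε p ω)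
      (fun ω (pr : (ℤ × ℤ) × ℕ) => Z pr.1 pr.2 ω) P)
    -- the INMA(q1,q2) random field
    (X : ℤ → ℤ → Ω → ℕ)
    (hX : ∀ s t ω, X s t ω =
      ∑ i ∈ range (q1 + 1), ∑ j ∈ range (q2 + 1),
        ∑ r ∈ range (ε (s - (i : ℤ), t - (j : ℤ)) ω),
          Z (s - (i : ℤ), t - (j : ℤ)) r ω (i, j))
    (s t : ℤ) :
    (∀ n : ℕ, P {ω | X s t ω = n} =
      ENNReal.ofReal (Real.exp (-(με * ∑ i ∈ range (q1 + 1), ∑ j ∈ range (q2 + 1), β i j))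
        * (με * ∑ i ∈ range (q1 + 1), ∑ j ∈ range (q2 + 1), β i j) ^ n / n.factorial)) ∧
    (∀ u ∈ Set.Icc (0 : ℝ) 1,
      ∫ ω, u ^ X s t ω ∂P =
        Real.exp (με * (∑ i ∈ range (q1 + 1), ∑ j ∈ range (q2 + 1), β i j) * (u - 1))) :=
  poisson_inma_marginal_general P q1 q2 β hβ ε hεmeas hεiid με hμε hεPoi Z hZmeas hZ01 hZiid hZβ
    hindep X hX s t
end
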